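/- arXiv:1807.00989 — 3 statements merged into one kernel-verified Lean document; each statement's English description precedes it below -/
import Mathlib

section
/- Let V be a smooth periodic solution of the LLB equation on [0, T] over ℝ^m. Then for every real p with 2 < p < ∞ and every t ∈ [0, T], ( ∫_{[0,1]^m} |V(t,x)|^p dx )^{1/p} ≤ ( ∫_{[0,1]^m} |V(0,x)|^p dx )^{1/p}. -/
open MeasureTheory

/-- The Euclidean Laplacian in `x` of a map `u : ℝ^m → ℝ³`: the sum of the `m`
second partial derivatives. -/
noncomputable def lap (m : ℕ) (u : (Fin m → ℝ) → (Fin 3 → ℝ)) (x : Fin m → ℝ) : Fin 3 → ℝ :=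
  ∑ i : Fin m, fderiv ℝ (fun y => fderiv ℝ u y (Pi.single i 1)) x (Pi.single i 1)

/-- `V : ℝ × ℝ^m → ℝ³` is a smooth periodic solution of the Landau–Lifshitz–Bloch equation
`∂ₜV = ΔV + V × ΔV − λ(1 + μ|V|²)V` on `[0,T]` (trivial rank-3 bundle over the flat torus
`ℝ^m/ℤ^m`): `V` is smooth, `ℤ^m`-periodic in `x`, and satisfies the equation for all
`t ∈ [0,T]` and all `x`. -/
def IsLLB (m : ℕ) (lam mu T : ℝ) (V : ℝ → (Fin m → ℝ) → (Fin 3 → ℝ)) : Prop :=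
  ContDiff ℝ (⊤ : ℕ∞) (fun p : ℝ × (Fin m → ℝ) => V p.1 p.2) ∧
  (∀ (t : ℝ) (x : Fin m → ℝ) (k : Fin m → ℤ), V t (x + fun i => (k i : ℝ)) = V t x) ∧
  ∀ t ∈ Set.Icc (0 : ℝ) T, ∀ x : Fin m → ℝ,
    deriv (fun s => V s x) t =
      lap m (V t) x + crossProduct (V t x) (lap m (V t) x)
        - (lam * (1 + mu * ∑ c, V t x c ^ 2)) • V t x

/-- Squared Hilbert–Schmidt norm `|D^i u(x)|²` of the `i`-th iterated total derivative of
`u : ℝ^m → ℝ³` at `x`: the sum of the squares of all its components. -/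
noncomputable def HSsq (m i : ℕ) (u : (Fin m → ℝ) → (Fin 3 → ℝ)) (x : Fin m → ℝ) : ℝ :=
  ∑ j : Fin i → Fin m, ∑ c : Fin 3,
    (iteratedFDeriv ℝ i u x (fun r => Pi.single (j r) 1) c) ^ 2

/-- The unit cube `[0,1]^m ⊆ ℝ^m`. -/
noncomputable def cube (m : ℕ) : Set (Fin m → ℝ) := Set.Icc 0 1

/-- Squared Sobolev norm `‖u‖²_{H^k} = ∑_{i=0}^k ∫_{[0,1]^m} |D^i u(x)|² dx`. -/
noncomputable def sobSq (m k : ℕ) (u : (Fin m → ℝ) → (Fin 3 → ℝ)) : ℝ :=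
  ∑ i ∈ Finset.range (k + 1), ∫ x in cube m, HSsq m i u x

/-- The sup norm `‖u‖_∞ = sup_x |u(x)|` (Euclidean norm on `ℝ³`). -/
noncomputable def supnorm (m : ℕ) (u : (Fin m → ℝ) → (Fin 3 → ℝ)) : ℝ :=
  ⨆ x : Fin m → ℝ, Real.sqrt (∑ c, u x c ^ 2)

section aux
variable {m : ℕ} (u : (Fin m → ℝ) → (Fin 3 → ℝ))

/-- first partial derivative in direction `i` -/
noncomputable def pdv (i : Fin m) (x : Fin m → ℝ) : Fin 3 → ℝ :=
  fderiv ℝ u x (Pi.single i 1)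

noncomputable def gsq (x : Fin m → ℝ) : ℝ := ∑ c, u x c ^ 2

noncomputable def Bf (i : Fin m) (x : Fin m → ℝ) : ℝ := ∑ c, u x c * pdv u i x c

/-- derivative of `fun x => u x c` -/
noncomputable def Duc (c : Fin 3) (x : Fin m → ℝ) : (Fin m → ℝ) →L[ℝ] ℝ :=
  (ContinuousLinearMap.proj c).comp (fderiv ℝ u x)

noncomputable def Dpd (i : Fin m) (c : Fin 3) (x : Fin m → ℝ) : (Fin m → ℝ) →L[ℝ] ℝ :=
  fderiv ℝ (fun y => pdv u i y c) x

noncomputable def Dg (x : Fin m → ℝ) : (Fin m → ℝ) →L[ℝ] ℝ :=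
  ∑ c, ((2:ℝ) * u x c) • Duc u c x

noncomputable def DB (i : Fin m) (x : Fin m → ℝ) : (Fin m → ℝ) →L[ℝ] ℝ :=
  ∑ c, (u x c • Dpd u i c x + pdv u i x c • Duc u c x)

end aux

section facts
variable {m : ℕ} {u : (Fin m → ℝ) → (Fin 3 → ℝ)} (hu : ContDiff ℝ (⊤ : ℕ∞) u)
include hu

lemma huc (c : Fin 3) : ContDiff ℝ (⊤ : ℕ∞) fun x => u x c := contDiff_pi.mp hu c

lemma hg_smooth : ContDiff ℝ (⊤ : ℕ∞) (gsq u) :=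
  ContDiff.sum fun c _ => (huc hu c).pow 2

lemma hpdc_smooth (i : Fin m) (c : Fin 3) : ContDiff ℝ (⊤ : ℕ∞) fun x => pdv u i x c := by
  have h1 : ContDiff ℝ (⊤ : ℕ∞) fun x => fderiv ℝ u x (Pi.single i 1) :=
    (hu.fderiv_right (by simp)).clm_apply contDiff_const
  exact contDiff_pi.mp h1 c

lemma hB_smooth (i : Fin m) : ContDiff ℝ (⊤ : ℕ∞) (Bf u i) :=
  ContDiff.sum fun c _ => (huc hu c).mul (hpdc_smooth hu i c)

lemma huc_has (c : Fin 3) (x : Fin m → ℝ) :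
    HasFDerivAt (fun x => u x c) (Duc u c x) x :=
  hasFDerivAt_pi'.mp (hu.differentiable (by simp) x).hasFDerivAt c

lemma hg_has (x : Fin m → ℝ) : HasFDerivAt (gsq u) (Dg u x) x := by
  have h : ∀ c : Fin 3, HasFDerivAt (fun x => u x c * u x c)
      (u x c • Duc u c x + u x c • Duc u c x) x :=
    fun c => (huc_has hu c x).mul (huc_has hu c x)
  have h2 := HasFDerivAt.sum (fun c (_ : c ∈ Finset.univ) => h c)
  have e1 : gsq u = fun x => ∑ c, u x c * u x c := by
    funext x; simp [gsq, sq]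
  have e2 : Dg u x = ∑ c, (u x c • Duc u c x + u x c • Duc u c x) := by
    simp [Dg, two_mul, add_smul]
  rw [e1, e2]; exact h2

lemma hpd_has (i : Fin m) (c : Fin 3) (x : Fin m → ℝ) :
    HasFDerivAt (fun y => pdv u i y c) (Dpd u i c x) x :=
  (((hpdc_smooth hu i c).differentiable (by simp)) x).hasFDerivAt

lemma hB_has (i : Fin m) (x : Fin m → ℝ) : HasFDerivAt (Bf u i) (DB u i x) x := by
  have h : ∀ c : Fin 3, HasFDerivAt (fun x => u x c * pdv u i x c)
      (u x c • Dpd u i c x + pdv u i x c • Duc u c x) x :=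
    fun c => (huc_has hu c x).mul (hpd_has hu i c x)
  exact HasFDerivAt.sum (fun c (_ : c ∈ Finset.univ) => h c)

omit hu in
lemma Dg_apply (x : Fin m → ℝ) (i : Fin m) :
    Dg u x (Pi.single i 1) = 2 * Bf u i x := by
  simp [Dg, Bf, Duc, pdv, Finset.mul_sum, mul_assoc]

omit hu in
lemma DB_apply (x : Fin m → ℝ) (i : Fin m) :
    DB u i x (Pi.single i 1)
      = ∑ c, (u x c * Dpd u i c x (Pi.single i 1) + pdv u i x c ^ 2) := by
  simp [DB, Duc, pdv, sq]

lemma sum_Dpd_eq_lap (x : Fin m → ℝ) (c : Fin 3) :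
    ∑ i, Dpd u i c x (Pi.single i 1) = lap m u x c := by
  have key : ∀ i : Fin m, fderiv ℝ (fun y => fderiv ℝ u y (Pi.single i 1)) x (Pi.single i 1) c
      = Dpd u i c x (Pi.single i 1) := by
    intro i
    have hdiff : ∀ c' : Fin 3, DifferentiableAt ℝ (fun y => pdv u i y c') x :=
      fun c' => ((hpdc_smooth hu i c').differentiable (by simp)) x
    have : fderiv ℝ (fun y (c' : Fin 3) => pdv u i y c') x
        = ContinuousLinearMap.pi fun c' => fderiv ℝ (fun y => pdv u i y c') x := fderiv_pi hdiff
    calc fderiv ℝ (fun y => fderiv ℝ u y (Pi.single i 1)) x (Pi.single i 1) c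
        = fderiv ℝ (fun y (c' : Fin 3) => pdv u i y c') x (Pi.single i 1) c := rfl
      _ = Dpd u i c x (Pi.single i 1) := by rw [this]; rfl
  rw [lap, Finset.sum_apply]
  exact (Finset.sum_congr rfl fun i _ => key i).symm
end facts

section vf
variable {m : ℕ} {u : (Fin m → ℝ) → (Fin 3 → ℝ)}

noncomputable def ff (u : (Fin m → ℝ) → (Fin 3 → ℝ)) (ε r : ℝ) (i : Fin m) (x : Fin m → ℝ) : ℝ :=
  (gsq u x + ε) ^ r * Bf u i x

noncomputable def ff' (u : (Fin m → ℝ) → (Fin 3 → ℝ)) (ε r : ℝ) (i : Fin m) (x : Fin m → ℝ) :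
    (Fin m → ℝ) →L[ℝ] ℝ :=
  (gsq u x + ε) ^ r • DB u i x + Bf u i x • ((r * (gsq u x + ε) ^ (r - 1)) • Dg u x)

lemma gsq_nonneg (x : Fin m → ℝ) : 0 ≤ gsq u x :=
  Finset.sum_nonneg fun c _ => sq_nonneg _

variable (hu : ContDiff ℝ (⊤ : ℕ∞) u)
include hu

lemma hf_has (ε r : ℝ) (hε : 0 < ε) (i : Fin m) (x : Fin m → ℝ) :
    HasFDerivAt (ff u ε r i) (ff' u ε r i x) x := by
  have hpos : 0 < gsq u x + ε := add_pos_of_nonneg_of_pos (gsq_nonneg x) hε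
  have h1 : HasFDerivAt (fun x => gsq u x + ε) (Dg u x) x := (hg_has hu x).add_const ε
  have h2 := Real.hasDerivAt_rpow_const (x := gsq u x + ε) (p := r) (Or.inl hpos.ne')
  have hA : HasFDerivAt (fun x => (gsq u x + ε) ^ r)
      ((r * (gsq u x + ε) ^ (r - 1)) • Dg u x) x := by
    have h5 := h2.comp_hasFDerivAt x h1; exact h5
  exact hA.mul (hB_has hu i x)

lemma fderiv_per (v : Fin m → ℝ) (hv : ∀ y, u (y + v) = u y) (x : Fin m → ℝ) :
    fderiv ℝ u (x + v) = fderiv ℝ u x := by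
  have h1 : HasFDerivAt u (fderiv ℝ u (x + v)) (x + v) :=
    ((hu.differentiable (by simp)) _).hasFDerivAt
  have h2 : HasFDerivAt (fun y => u (y + v))
      ((fderiv ℝ u (x + v)).comp (ContinuousLinearMap.id ℝ (Fin m → ℝ))) x := by
    have h3 := h1.comp x ((hasFDerivAt_id x).add_const v)
    exact h3
  rw [funext hv] at h2
  have h4 := h2.fderiv
  rw [ContinuousLinearMap.comp_id] at h4
  exact h4.symm

lemma ff_per (ε r : ℝ) (i : Fin m) (hv : ∀ y, u (y + Pi.single i 1) = u y) (x : Fin m → ℝ) :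
    ff u ε r i (x + Pi.single i 1) = ff u ε r i x := by
  have hfd := fderiv_per hu (Pi.single i 1) hv x
  simp only [ff, gsq, Bf, pdv, hfd, hv x]

omit hu in
lemma div_eq (ε r : ℝ) (hu : ContDiff ℝ (⊤ : ℕ∞) u) (x : Fin m → ℝ) :
    ∑ i, ff' u ε r i x (Pi.single i 1)
      = (2 * r * (gsq u x + ε) ^ (r - 1)) * ∑ i, Bf u i x ^ 2
        + (gsq u x + ε) ^ r *
          ((∑ i, ∑ c, pdv u i x c ^ 2) + ∑ c, u x c * lap m u x c) := by
  simp only [ff', ContinuousLinearMap.add_apply, ContinuousLinearMap.smul_apply, smul_eq_mul,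
    Dg_apply, DB_apply]
  rw [Finset.sum_add_distrib]
  have e1 : ∑ i, Bf u i x * (r * (gsq u x + ε) ^ (r - 1) * (2 * Bf u i x))
      = (2 * r * (gsq u x + ε) ^ (r - 1)) * ∑ i, Bf u i x ^ 2 := by
    rw [Finset.mul_sum]; exact Finset.sum_congr rfl fun i _ => by ring
  have e2 : ∑ i, (gsq u x + ε) ^ r * (∑ c, (u x c * Dpd u i c x (Pi.single i 1) + pdv u i x c ^ 2))
      = (gsq u x + ε) ^ r * ((∑ i, ∑ c, pdv u i x c ^ 2) + ∑ c, u x c * lap m u x c) := by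
    rw [← Finset.mul_sum]
    congr 1
    simp only [Finset.sum_add_distrib]
    rw [add_comm]
    congr 1
    rw [Finset.sum_comm]
    refine Finset.sum_congr rfl fun c _ => ?_
    rw [← sum_Dpd_eq_lap hu x c, Finset.mul_sum]
  rw [e1, e2]; ring
end vf

lemma insertNth_one_eq (n : ℕ) (i : Fin (n+1)) (y : Fin n → ℝ) :
    (i.insertNth (1:ℝ) y : Fin (n+1) → ℝ) = i.insertNth (0:ℝ) y + Pi.single i 1 := by
  funext j
  rcases eq_or_ne j i with rfl | hj
  · simp
  · rcases Fin.exists_succAbove_eq hj with ⟨k, rfl⟩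
    simp [Fin.insertNth_apply_succAbove, Pi.single_eq_of_ne (Fin.succAbove_ne i k)]

/-- Divergence of a C¹ periodic vector field integrates to zero over the unit cube. -/
lemma periodic_div_zero (n : ℕ) (f : Fin (n+1) → (Fin (n+1) → ℝ) → ℝ)
    (f' : Fin (n+1) → (Fin (n+1) → ℝ) → ((Fin (n+1) → ℝ) →L[ℝ] ℝ))
    (hd : ∀ i x, HasFDerivAt (f i) (f' i x) x)
    (hper : ∀ i x, f i (x + Pi.single i 1) = f i x)
    (hcont : ContinuousOn (fun x => ∑ i, f' i x (Pi.single i 1)) (Set.Icc 0 1)) :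
    ∫ x in Set.Icc (0 : Fin (n+1) → ℝ) 1, ∑ i, f' i x (Pi.single i 1) = 0 := by
  have h := integral_divergence_of_hasFDerivAt_off_countable'
    (0 : Fin (n+1) → ℝ) 1 zero_le_one f f' ∅ Set.countable_empty
    (fun i => Continuous.continuousOn (by exact continuous_iff_continuousAt.2 fun x => (hd i x).continuousAt))
    (fun x _ i => hd i x)
    (hcont.integrableOn_compact isCompact_Icc)
  rw [h]
  refine Finset.sum_eq_zero fun i _ => sub_eq_zero.2 ?_
  refine setIntegral_congr_fun measurableSet_Icc fun y _ => ?_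
  have : (fun j => (1 : Fin (n+1) → ℝ) j) = (1 : Fin (n+1) → ℝ) := rfl
  show f i (i.insertNth ((1 : Fin (n+1) → ℝ) i) y) = f i (i.insertNth ((0 : Fin (n+1) → ℝ) i) y)
  simp only [Pi.one_apply, Pi.zero_apply]
  rw [insertNth_one_eq, hper]

section keydiv
variable {m : ℕ} {u : (Fin m → ℝ) → (Fin 3 → ℝ)} (hu : ContDiff ℝ (⊤ : ℕ∞) u)
include hu

lemma lap_cont (c : Fin 3) : Continuous fun x => lap m u x c := by
  have h : (fun x => lap m u x c) = fun x => ∑ i, Dpd u i c x (Pi.single i 1) := by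
    funext x; exact (sum_Dpd_eq_lap hu x c).symm
  rw [h]
  refine continuous_finset_sum _ fun i _ => ?_
  have hs : ContDiff ℝ (⊤ : ℕ∞) (fderiv ℝ fun x => pdv u i x c) :=
    (hpdc_smooth hu i c).fderiv_right (m := (⊤ : ℕ∞)) (by simp)
  exact (hs.continuous.clm_apply continuous_const)

lemma pdv_cont (i : Fin m) (c : Fin 3) : Continuous fun x => pdv u i x c :=
  (hpdc_smooth hu i c).continuous

lemma rpow_cont (ε r : ℝ) (hε : 0 < ε) :
    Continuous fun x => (gsq u x + ε) ^ r := by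
  rw [continuous_iff_continuousAt]
  intro x
  have hpos : 0 < gsq u x + ε := add_pos_of_nonneg_of_pos (gsq_nonneg x) hε
  exact (((hg_smooth hu).continuous.add continuous_const).continuousAt).rpow_const
    (Or.inl hpos.ne')

omit hu in
lemma key_div (n : ℕ) {u : (Fin (n+1) → ℝ) → (Fin 3 → ℝ)} (hu : ContDiff ℝ (⊤ : ℕ∞) u)
    (hper : ∀ (x : Fin (n+1) → ℝ) (i : Fin (n+1)), u (x + Pi.single i 1) = u x)
    (ε r : ℝ) (hε : 0 < ε) (hr : 0 < r) :
    ∫ x in Set.Icc (0 : Fin (n+1) → ℝ) 1,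
      (gsq u x + ε) ^ r * ∑ c, u x c * lap (n+1) u x c ≤ 0 := by
  set N : (Fin (n+1) → ℝ) → ℝ := fun x =>
    (2 * r * (gsq u x + ε) ^ (r - 1)) * ∑ i, Bf u i x ^ 2
      + (gsq u x + ε) ^ r * ∑ i, ∑ c, pdv u i x c ^ 2 with hN
  set Tgt : (Fin (n+1) → ℝ) → ℝ := fun x =>
    (gsq u x + ε) ^ r * ∑ c, u x c * lap (n+1) u x c with hTgt
  -- continuity
  have cB : ∀ i, Continuous (Bf u i) := fun i => (hB_smooth hu i).continuous
  have cN : Continuous N := by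
    apply Continuous.add
    · exact ((continuous_const.mul (rpow_cont hu ε (r-1) hε))).mul
        (continuous_finset_sum _ fun i _ => ((cB i).pow 2))
    · exact (rpow_cont hu ε r hε).mul
        (continuous_finset_sum _ fun i _ => continuous_finset_sum _ fun c _ =>
          ((pdv_cont hu i c).pow 2))
  have cT : Continuous Tgt :=
    (rpow_cont hu ε r hε).mul (continuous_finset_sum _ fun c _ =>
      ((contDiff_pi.mp hu c).continuous.mul (lap_cont hu c)))
  -- divergence theorem
  have hdiv := periodic_div_zero n (ff u ε r) (ff' u ε r)
    (fun i x => hf_has hu ε r hε i x)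
    (fun i x => ff_per hu ε r i (fun y => hper y i) x)
    (by
      refine Continuous.continuousOn ?_
      have : (fun x => ∑ i, ff' u ε r i x (Pi.single i 1)) = fun x => N x + Tgt x := by
        funext x; rw [div_eq ε r hu x]; simp only [hN, hTgt]; ring
      rw [this]; exact cN.add cT)
  have heq : (fun x => ∑ i, ff' u ε r i x (Pi.single i 1)) = fun x => N x + Tgt x := by
    funext x; rw [div_eq ε r hu x]; simp only [hN, hTgt]; ring
  rw [heq] at hdiv
  have hNint : IntegrableOn N (Set.Icc (0:Fin (n+1)→ℝ) 1) volume :=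
    cN.continuousOn.integrableOn_compact isCompact_Icc
  have hTint : IntegrableOn Tgt (Set.Icc (0:Fin (n+1)→ℝ) 1) volume :=
    cT.continuousOn.integrableOn_compact isCompact_Icc
  rw [integral_add hNint hTint] at hdiv
  have hNnn : 0 ≤ ∫ x in Set.Icc (0:Fin (n+1)→ℝ) 1, N x := by
    refine setIntegral_nonneg measurableSet_Icc fun x _ => ?_
    have h1 : (0:ℝ) ≤ (gsq u x + ε) ^ (r-1) :=
      Real.rpow_nonneg (le_of_lt (add_pos_of_nonneg_of_pos (gsq_nonneg x) hε)) _
    have h2 : (0:ℝ) ≤ (gsq u x + ε) ^ r :=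
      Real.rpow_nonneg (le_of_lt (add_pos_of_nonneg_of_pos (gsq_nonneg x) hε)) _
    have h3 : (0:ℝ) ≤ ∑ i, Bf u i x ^ 2 := Finset.sum_nonneg fun i _ => sq_nonneg _
    have h4 : (0:ℝ) ≤ ∑ i, ∑ c, pdv u i x c ^ 2 :=
      Finset.sum_nonneg fun i _ => Finset.sum_nonneg fun c _ => sq_nonneg _
    have := hr.le
    positivity
  linarith
end keydiv

section main
variable {n : ℕ} {lam mu T : ℝ} {V : ℝ → (Fin (n+1) → ℝ) → (Fin 3 → ℝ)}

set_option maxHeartbeats 2000000 in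
lemma Feps_mono (hlam : 0 < lam) (hmu : 0 < mu)
    (hVs : ContDiff ℝ (⊤ : ℕ∞) (fun pr : ℝ × (Fin (n+1) → ℝ) => V pr.1 pr.2))
    (hper : ∀ (t : ℝ) (x : Fin (n+1) → ℝ) (i : Fin (n+1)), V t (x + Pi.single i 1) = V t x)
    (hpde : ∀ t ∈ Set.Icc (0 : ℝ) T, ∀ x : Fin (n+1) → ℝ,
      deriv (fun s => V s x) t =
        lap (n+1) (V t) x + crossProduct (V t x) (lap (n+1) (V t) x)
          - (lam * (1 + mu * ∑ c, V t x c ^ 2)) • V t x)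
    (q ε : ℝ) (hq : 1 < q) (hε : 0 < ε) (t : ℝ) (ht : t ∈ Set.Icc (0 : ℝ) T) :
    ∫ x in Set.Icc (0 : Fin (n+1) → ℝ) 1, (gsq (V t) x + ε) ^ q
      ≤ ∫ x in Set.Icc (0 : Fin (n+1) → ℝ) 1, (gsq (V 0) x + ε) ^ q := by
  have hX : True := trivial
  set J : ℝ × (Fin (n+1) → ℝ) → Fin 3 → ℝ := fun pr => V pr.1 pr.2 with hJ
  set Dt : ℝ →  (Fin (n+1) → ℝ) → Fin 3 → ℝ := fun t x => fderiv ℝ J (t, x) (1, 0) with hDtdef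
  set Φ : ℝ →  (Fin (n+1) → ℝ) → ℝ := fun t x => (gsq (V t) x + ε) ^ q with hΦ
  set Φt : ℝ →  (Fin (n+1) → ℝ) → ℝ :=
    fun t x => q * (gsq (V t) x + ε) ^ (q - 1) * ∑ c, 2 * V t x c * Dt t x c with hΦt
  set F : ℝ → ℝ := fun t => ∫ x in Set.Icc (0 : Fin (n+1) → ℝ) 1, Φ t x with hF
  -- each V t is smooth
  have hVt : ∀ t : ℝ, ContDiff ℝ (⊤ : ℕ∞) (V t) := fun t =>
    hVs.comp (contDiff_const.prodMk contDiff_id)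
  have hgpos : ∀ (t : ℝ) (x : Fin (n+1) → ℝ), 0 < gsq (V t) x + ε :=
    fun t x => add_pos_of_nonneg_of_pos (gsq_nonneg x) hε
  -- time derivative of V
  have hDt : ∀ (t : ℝ) (x : Fin (n+1) → ℝ), HasDerivAt (fun s => V s x) (Dt t x) t := by
    intro t x
    have h := ((hVs.differentiable (by simp)) (t, x)).hasFDerivAt
    have hc : HasDerivAt (fun s : ℝ => (s, x)) ((1 : ℝ), (0 : Fin (n+1) → ℝ)) t :=
      (hasDerivAt_id t).prodMk (hasDerivAt_const t x)
    exact h.comp_hasDerivAt t hc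
  have hDtc : ∀ (t : ℝ) (x : Fin (n+1) → ℝ) (c : Fin 3),
      HasDerivAt (fun s => V s x c) (Dt t x c) t := by
    intro t x c
    have h := hasFDerivAt_pi'.mp (hDt t x).hasFDerivAt c
    simpa using h.hasDerivAt
  -- Φ has t-derivative Φt
  have hPhiD : ∀ (t : ℝ) (x : Fin (n+1) → ℝ), HasDerivAt (fun s => Φ s x) (Φt t x) t := by
    intro t x
    have hG : HasDerivAt (fun s => gsq (V s) x) (∑ c, 2 * V t x c * Dt t x c) t := by
      have h1 : ∀ c : Fin 3, HasDerivAt (fun s => V s x c * V s x c)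
          (Dt t x c * V t x c + V t x c * Dt t x c) t :=
        fun c => (hDtc t x c).mul (hDtc t x c)
      have h2 := HasDerivAt.sum (fun c (_ : c ∈ Finset.univ) => h1 c)
      have e1 : (fun s => gsq (V s) x) = fun s => ∑ c, V s x c * V s x c := by
        funext s; simp [gsq, sq]
      rw [e1]
      exact h2.congr_deriv (Finset.sum_congr rfl fun c _ => by ring)
    have h3 := (Real.hasDerivAt_rpow_const (x := gsq (V t) x + ε) (p := q)
      (Or.inl (hgpos t x).ne')).comp t (hG.add_const ε)
    simpa [hΦ, hΦt, mul_assoc, Function.comp_def] using h3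
  -- joint continuity of Φt
  have cDt : Continuous fun pr : ℝ ×  (Fin (n+1) → ℝ) => Dt pr.1 pr.2 := by
    have : Continuous fun pr : ℝ ×  (Fin (n+1) → ℝ) => fderiv ℝ J pr ((1 : ℝ), (0 : Fin (n+1) → ℝ)) :=
      ((hVs.fderiv_right (m := (⊤ : ℕ∞)) (by simp)).continuous).clm_apply continuous_const
    exact this
  have cV : Continuous fun pr : ℝ ×  (Fin (n+1) → ℝ) => V pr.1 pr.2 := hVs.continuous
  have cG : Continuous fun pr : ℝ ×  (Fin (n+1) → ℝ) => gsq (V pr.1) pr.2 := by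
    have : (fun pr : ℝ ×  (Fin (n+1) → ℝ) => gsq (V pr.1) pr.2) = fun pr => ∑ c, J pr c ^ 2 := rfl
    rw [this]
    exact continuous_finset_sum _ fun c _ => ((continuous_apply c).comp cV).pow 2
  have cGA : ContinuousAt (fun pr : ℝ × (Fin (n+1) → ℝ) => gsq (V pr.1) pr.2 + ε) =
      ContinuousAt (fun pr : ℝ × (Fin (n+1) → ℝ) => gsq (V pr.1) pr.2 + ε) := rfl
  have cΦt : Continuous fun pr : ℝ × (Fin (n+1) → ℝ) => Φt pr.1 pr.2 := by
    simp only [hΦt]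
    apply Continuous.mul
    · apply Continuous.mul continuous_const
      rw [continuous_iff_continuousAt]; intro pr
      exact ((cG.add continuous_const).continuousAt).rpow_const (Or.inl (hgpos pr.1 pr.2).ne')
    · exact continuous_finset_sum _ fun c _ =>
        (continuous_const.mul ((continuous_apply c).comp cV)).mul
          ((continuous_apply c).comp cDt)
  have cΦ : Continuous fun pr : ℝ × (Fin (n+1) → ℝ) => Φ pr.1 pr.2 := by
    simp only [hΦ]
    rw [continuous_iff_continuousAt]; intro pr
    exact ((cG.add continuous_const).continuousAt).rpow_const (Or.inl (hgpos pr.1 pr.2).ne')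
  have cΦx : ∀ s : ℝ, Continuous (Φ s) := by
    intro s
    have h := cΦ.comp ((continuous_const.prodMk continuous_id : Continuous fun x : Fin (n+1) → ℝ => (s, x)))
    exact h
  have cΦtx : ∀ s : ℝ, Continuous (Φt s) := by
    intro s
    have h := cΦt.comp ((continuous_const.prodMk continuous_id : Continuous fun x : Fin (n+1) → ℝ => (s, x)))
    exact h
  have hμfin : IsFiniteMeasure (volume.restrict (Set.Icc (0 : Fin (n+1) → ℝ) 1)) :=
    ⟨by rw [Measure.restrict_apply_univ]; exact isCompact_Icc.measure_lt_top⟩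
  -- derivative of F
  have hFD : ∀ t₀ : ℝ,
      HasDerivAt F (∫ x in Set.Icc (0 : Fin (n+1) → ℝ) 1, Φt t₀ x) t₀ := by
    intro t₀
    have hK : IsCompact ((Set.Icc (t₀-1) (t₀+1)) ×ˢ (Set.Icc (0 : Fin (n+1) → ℝ) 1)) :=
      isCompact_Icc.prod isCompact_Icc
    obtain ⟨C, hC⟩ := hK.exists_bound_of_continuousOn cΦt.continuousOn
    have key := hasDerivAt_integral_of_dominated_loc_of_deriv_le
      (F := fun t x => Φ t x) (F' := fun t x => Φt t x) (x₀ := t₀) (s := Metric.ball t₀ 1)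
      (μ := volume.restrict (Set.Icc (0 : Fin (n+1) → ℝ) 1)) (bound := fun _ => C)
      (Metric.ball_mem_nhds t₀ one_pos)
      (Filter.Eventually.of_forall fun s => (cΦx s).aestronglyMeasurable)
      ((cΦx t₀).continuousOn.integrableOn_compact isCompact_Icc)
      ((cΦtx t₀).aestronglyMeasurable)
      (by
        refine (ae_restrict_mem measurableSet_Icc).mono (fun x hx s hs => ?_)
        refine hC (s, x) ⟨?_, hx⟩
        rw [Metric.mem_ball, Real.dist_eq, abs_lt] at hs
        exact Set.mem_Icc.2 ⟨by linarith [hs.1], by linarith [hs.2]⟩)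
      (integrable_const C)
      (Filter.Eventually.of_forall fun x s _ => hPhiD s x)
    exact key.2
  -- sign of the derivative on [0,T]
  have hsign : ∀ t₀ ∈ Set.Icc (0:ℝ) T,
      (∫ x in Set.Icc (0 : Fin (n+1) → ℝ) 1, Φt t₀ x) ≤ 0 := by
    intro t₀ ht₀
    have hu := hVt t₀
    have hDteq : ∀ x : Fin (n+1) → ℝ, Dt t₀ x =
        lap (n+1) (V t₀) x + crossProduct (V t₀ x) (lap (n+1) (V t₀) x)
          - (lam * (1 + mu * ∑ c, V t₀ x c ^ 2)) • V t₀ x := by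
      intro x
      rw [← (hDt t₀ x).deriv]
      exact hpde t₀ ht₀ x
    have hcross : ∀ x : Fin (n+1) → ℝ,
        ∑ c, V t₀ x c * crossProduct (V t₀ x) (lap (n+1) (V t₀) x) c = 0 := by
      intro x
      have h := dot_self_cross (V t₀ x) (lap (n+1) (V t₀) x)
      simpa [dotProduct] using h
    have hrw : ∀ x : Fin (n+1) → ℝ, Φt t₀ x =
        (2*q) * ((gsq (V t₀) x + ε) ^ (q-1) * ∑ c, V t₀ x c * lap (n+1) (V t₀) x c)
          - (2*q*lam) * ((gsq (V t₀) x + ε) ^ (q-1)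
              * ((1 + mu * gsq (V t₀) x) * gsq (V t₀) x)) := by
      intro x
      simp only [hΦt, hDteq x, Pi.add_apply, Pi.sub_apply, Pi.smul_apply, smul_eq_mul]
      have e1 : ∑ c, 2 * V t₀ x c *
          (lap (n+1) (V t₀) x c + crossProduct (V t₀ x) (lap (n+1) (V t₀) x) c
            - lam * (1 + mu * ∑ c', V t₀ x c' ^ 2) * V t₀ x c)
          = 2 * ((∑ c, V t₀ x c * lap (n+1) (V t₀) x c)
              - lam * ((1 + mu * gsq (V t₀) x) * gsq (V t₀) x)) := by
        have h2 : ∀ c : Fin 3, 2 * V t₀ x c *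
            (lap (n+1) (V t₀) x c + crossProduct (V t₀ x) (lap (n+1) (V t₀) x) c
              - lam * (1 + mu * ∑ c', V t₀ x c' ^ 2) * V t₀ x c)
            = 2 * (V t₀ x c * lap (n+1) (V t₀) x c)
              + 2 * (V t₀ x c * crossProduct (V t₀ x) (lap (n+1) (V t₀) x) c)
              - (2 * (lam * (1 + mu * gsq (V t₀) x))) * (V t₀ x c ^ 2) := by
          intro c; simp only [gsq]; ring
        rw [Finset.sum_congr rfl fun c _ => h2 c]
        rw [Finset.sum_sub_distrib, Finset.sum_add_distrib, ← Finset.mul_sum,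
          ← Finset.mul_sum, ← Finset.mul_sum, hcross x]
        simp only [gsq]
        ring
      rw [e1]; ring
    -- integrate the two pieces
    have hA_le := key_div n hu (fun x i => hper t₀ x i) ε (q-1) hε (by linarith)
    set A : (Fin (n+1) → ℝ) → ℝ := fun x =>
      (gsq (V t₀) x + ε) ^ (q-1) * ∑ c, V t₀ x c * lap (n+1) (V t₀) x c with hA
    set Bx : (Fin (n+1) → ℝ) → ℝ := fun x =>
      (gsq (V t₀) x + ε) ^ (q-1) * ((1 + mu * gsq (V t₀) x) * gsq (V t₀) x) with hBx
    have cA : Continuous A := (rpow_cont hu ε (q-1) hε).mul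
      (continuous_finset_sum _ fun c _ =>
        ((contDiff_pi.mp hu c).continuous.mul (lap_cont hu c)))
    have cB : Continuous Bx := (rpow_cont hu ε (q-1) hε).mul
      ((continuous_const.add (continuous_const.mul (hg_smooth hu).continuous)).mul
        (hg_smooth hu).continuous)
    have hAint : IntegrableOn A (Set.Icc (0 : Fin (n+1) → ℝ) 1) volume :=
      cA.continuousOn.integrableOn_compact isCompact_Icc
    have hBint : IntegrableOn Bx (Set.Icc (0 : Fin (n+1) → ℝ) 1) volume :=
      cB.continuousOn.integrableOn_compact isCompact_Icc
    have hint : (fun x => Φt t₀ x) = fun x => (2*q) * A x - (2*q*lam) * Bx x := by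
      funext x; rw [hrw x]
    have hBnn : 0 ≤ ∫ x in Set.Icc (0 : Fin (n+1) → ℝ) 1, Bx x := by
      refine setIntegral_nonneg measurableSet_Icc fun x _ => ?_
      have h1 : (0:ℝ) ≤ (gsq (V t₀) x + ε) ^ (q-1) :=
        Real.rpow_nonneg (hgpos t₀ x).le _
      have h2 := gsq_nonneg (u := V t₀) x
      have := hmu.le
      positivity
    have hsplit : (∫ x in Set.Icc (0 : Fin (n+1) → ℝ) 1, Φt t₀ x)
        = (2*q) * (∫ x in Set.Icc (0 : Fin (n+1) → ℝ) 1, A x)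
          - (2*q*lam) * ∫ x in Set.Icc (0 : Fin (n+1) → ℝ) 1, Bx x := by
      rw [hint, integral_sub (hAint.const_mul _) (hBint.const_mul _),
        integral_const_mul, integral_const_mul]
    rw [hsplit]
    have hq0 : (0:ℝ) < 2*q := by linarith
    have hql : (0:ℝ) ≤ 2*q*lam :=
      mul_nonneg (mul_nonneg (by norm_num) (by linarith)) hlam.le
    nlinarith [mul_nonneg hql hBnn, mul_nonpos_of_nonneg_of_nonpos hq0.le hA_le]
  -- conclude by monotonicity
  have h0T : (0:ℝ) ∈ Set.Icc (0:ℝ) T := Set.mem_Icc.2 ⟨le_refl 0, le_trans ht.1 ht.2⟩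
  have hant : AntitoneOn F (Set.Icc (0:ℝ) T) := by
    apply antitoneOn_of_deriv_nonpos (convex_Icc 0 T)
    · exact Continuous.continuousOn (by
        rw [continuous_iff_continuousAt]; exact fun s => (hFD s).continuousAt)
    · intro s hs
      exact (hFD s).differentiableAt.differentiableWithinAt
    · intro s hs
      rw [interior_Icc] at hs
      rw [(hFD s).deriv]
      exact hsign s ⟨hs.1.le, hs.2.le⟩
  exact hant h0T ht ht.1
end main


set_option maxHeartbeats 2000000 in
/-- For a smooth periodic solution `V` of the LLB equation on `[0,T]` over `ℝ^m`, the
`L^p` norms over the unit cube are nonincreasing: for `2 < p < ∞` and `t ∈ [0,T]`,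
`(∫_{[0,1]^m} |V(t,x)|^p dx)^{1/p} ≤ (∫_{[0,1]^m} |V(0,x)|^p dx)^{1/p}`. -/
theorem llb_lp_decreasing (m : ℕ) (hm : 1 ≤ m) (lam mu T : ℝ)
    (hlam : 0 < lam) (hmu : 0 < mu) (hT : 0 < T)
    (V : ℝ → (Fin m → ℝ) → (Fin 3 → ℝ)) (hV : IsLLB m lam mu T V)
    (p : ℝ) (hp : 2 < p) (t : ℝ) (ht : t ∈ Set.Icc (0 : ℝ) T) :
    (∫ x in cube m, Real.sqrt (∑ c, V t x c ^ 2) ^ p) ^ (1 / p) ≤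
      (∫ x in cube m, Real.sqrt (∑ c, V 0 x c ^ 2) ^ p) ^ (1 / p) := by
  obtain ⟨n, rfl⟩ : ∃ n, m = n + 1 := ⟨m - 1, (Nat.succ_pred_eq_of_pos hm).symm⟩
  obtain ⟨hVs, hper0, hpde⟩ := hV
  set q : ℝ := p / 2 with hqdef
  have hq : 1 < q := by rw [hqdef]; linarith
  have hq0 : (0:ℝ) ≤ q := by linarith
  have hper : ∀ (s : ℝ) (x : Fin (n+1) → ℝ) (i : Fin (n+1)),
      V s (x + Pi.single i 1) = V s x := by
    intro s x i
    have e : (fun j => ((Pi.single i (1:ℤ) : Fin (n+1) → ℤ) j : ℝ))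
        = Pi.single i (1:ℝ) := by
      funext j; by_cases hj : j = i <;> simp [Pi.single_apply, hj]
    rw [← e]; exact hper0 s x (Pi.single i 1)
  have hVt : ∀ s : ℝ, ContDiff ℝ (⊤ : ℕ∞) (V s) := fun s =>
    hVs.comp (contDiff_const.prodMk contDiff_id)
  -- rewrite the integrands
  have hsq : ∀ (s : ℝ) (x : Fin (n+1) → ℝ),
      Real.sqrt (∑ c, V s x c ^ 2) ^ p = gsq (V s) x ^ q := by
    intro s x
    have h0 : (0:ℝ) ≤ ∑ c, V s x c ^ 2 := gsq_nonneg (u := V s) x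
    rw [Real.sqrt_eq_rpow, ← Real.rpow_mul h0]
    congr 1
    rw [hqdef]; ring
  have hcube : cube (n+1) = Set.Icc (0 : Fin (n+1) → ℝ) 1 := rfl
  simp only [hsq, hcube]
  -- key inequality via ε → 0
  have cgt : ∀ s : ℝ, Continuous (gsq (V s)) := fun s => (hg_smooth (hVt s)).continuous
  have key : ∀ ε : ℝ, 0 < ε →
      (∫ x in Set.Icc (0 : Fin (n+1) → ℝ) 1, gsq (V t) x ^ q)
        ≤ ∫ x in Set.Icc (0 : Fin (n+1) → ℝ) 1, (gsq (V 0) x + ε) ^ q := by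
    intro ε hε
    have h1 : (∫ x in Set.Icc (0 : Fin (n+1) → ℝ) 1, gsq (V t) x ^ q)
        ≤ ∫ x in Set.Icc (0 : Fin (n+1) → ℝ) 1, (gsq (V t) x + ε) ^ q := by
      refine setIntegral_mono_on
        (((Real.continuous_rpow_const hq0).comp (cgt t)).continuousOn.integrableOn_compact
          isCompact_Icc)
        (((Real.continuous_rpow_const hq0).comp
          ((cgt t).add continuous_const)).continuousOn.integrableOn_compact isCompact_Icc)
        measurableSet_Icc fun x _ => ?_
      exact Real.rpow_le_rpow (gsq_nonneg x) (by linarith) hq0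
    have h2 := Feps_mono hlam hmu hVs hper hpde q ε hq hε t ht
    linarith
  have hlim : Filter.Tendsto
      (fun k : ℕ => ∫ x in Set.Icc (0 : Fin (n+1) → ℝ) 1, (gsq (V 0) x + 1/(k+1)) ^ q)
      Filter.atTop
      (nhds (∫ x in Set.Icc (0 : Fin (n+1) → ℝ) 1, gsq (V 0) x ^ q)) := by
    refine tendsto_integral_of_dominated_convergence (fun x => (gsq (V 0) x + 1) ^ q)
      (fun k => (((Real.continuous_rpow_const hq0).comp
        ((cgt 0).add continuous_const)).aestronglyMeasurable))
      ((((Real.continuous_rpow_const hq0).comp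
        ((cgt 0).add continuous_const)).continuousOn.integrableOn_compact isCompact_Icc))
      (fun k => Filter.Eventually.of_forall fun x => ?_) ?_
    · have hg0 := gsq_nonneg (u := V 0) x
      have h1k : (0:ℝ) < 1/((k:ℝ)+1) := by positivity
      rw [Real.norm_eq_abs, abs_of_nonneg (Real.rpow_nonneg (by linarith) _)]
      refine Real.rpow_le_rpow (by linarith) ?_ hq0
      have : 1/((k:ℝ)+1) ≤ 1 := by
        rw [div_le_one (by positivity)]; linarith [Nat.cast_nonneg (α := ℝ) k]
      linarith
    · refine Filter.Eventually.of_forall fun x => ?_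
      have hb : Filter.Tendsto (fun k : ℕ => gsq (V 0) x + 1/(k+1)) Filter.atTop
          (nhds (gsq (V 0) x)) := by
        have := tendsto_one_div_add_atTop_nhds_zero_nat (𝕜 := ℝ)
        have h := Filter.Tendsto.const_add (gsq (V 0) x) this
        simpa using h
      have hc : ContinuousAt (fun y : ℝ => y ^ q) (gsq (V 0) x) :=
        Real.continuousAt_rpow_const _ _ (Or.inr hq0)
      exact (hc.tendsto.comp hb)
  have hle : (∫ x in Set.Icc (0 : Fin (n+1) → ℝ) 1, gsq (V t) x ^ q)
      ≤ ∫ x in Set.Icc (0 : Fin (n+1) → ℝ) 1, gsq (V 0) x ^ q := by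
    refine ge_of_tendsto hlim (Filter.Eventually.of_forall fun k => ?_)
    exact key (1/(k+1)) (by positivity)
  have hnn : (0:ℝ) ≤ ∫ x in Set.Icc (0 : Fin (n+1) → ℝ) 1, gsq (V t) x ^ q :=
    setIntegral_nonneg measurableSet_Icc fun x _ => Real.rpow_nonneg (gsq_nonneg x) q
  exact Real.rpow_le_rpow hnn hle (by positivity)
end

section
/- Let V be a smooth periodic solution of the LLB equation on [0, T] over ℝ^m. Then for every t ∈ [0, T], sup_{x ∈ ℝ^m} |V(t,x)| ≤ sup_{x ∈ ℝ^m} |V(0,x)|. -/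
open MeasureTheory

lemma secondDerivTest {g : ℝ → ℝ} (hg : ContDiff ℝ (⊤:ℕ∞) g) (hmax : ∀ r, g r ≤ g 0) :
    deriv (deriv g) 0 ≤ 0 := by
  by_contra h
  push_neg at h
  have hdg : ContDiff ℝ (⊤:ℕ∞) (deriv g) := (contDiff_infty_iff_deriv.mp hg).2
  have hg10 : deriv g 0 = 0 := by
    have : IsLocalMax g 0 := Filter.Eventually.of_forall hmax
    exact this.deriv_eq_zero
  have hcont : ContinuousAt (deriv (deriv g)) 0 :=
    ((contDiff_infty_iff_deriv.mp hdg).2.continuous).continuousAt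
  have hev : ∀ᶠ r in nhds (0:ℝ), 0 < deriv (deriv g) r :=
    hcont.eventually (eventually_gt_nhds h)
  obtain ⟨δ, hδ, hball⟩ := Metric.eventually_nhds_iff_ball.mp hev
  set b := δ/2 with hb
  have hb0 : 0 < b := by positivity
  have hsub : ∀ r ∈ Set.Ioo (0:ℝ) b, 0 < deriv (deriv g) r := by
    intro r hr
    apply hball
    rw [Metric.mem_ball, Real.dist_eq, sub_zero, abs_of_pos hr.1]
    linarith [hr.2]
  have hmono1 : StrictMonoOn (deriv g) (Set.Icc 0 b) := by
    apply strictMonoOn_of_deriv_pos (convex_Icc _ _) (hdg.continuous.continuousOn)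
    intro r hr
    rw [interior_Icc] at hr
    exact hsub r hr
  have hpos1 : ∀ r ∈ Set.Ioo (0:ℝ) b, 0 < deriv g r := by
    intro r hr
    have := hmono1 (Set.left_mem_Icc.mpr hb0.le) ⟨hr.1.le, hr.2.le⟩ hr.1
    rwa [hg10] at this
  have hmono : StrictMonoOn g (Set.Icc 0 b) := by
    apply strictMonoOn_of_deriv_pos (convex_Icc _ _) (hg.continuous.continuousOn)
    intro r hr
    rw [interior_Icc] at hr
    exact hpos1 r hr
  have := hmono (Set.left_mem_Icc.mpr hb0.le) (Set.right_mem_Icc.mpr hb0.le) hb0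
  exact absurd (hmax b) (not_le.mpr this)

lemma leftDerivTest {g : ℝ → ℝ} {d a : ℝ} (ha : 0 < a)
    (hg : HasDerivAt g d a) (hmax : ∀ s ∈ Set.Icc 0 a, g s ≤ g a) : 0 ≤ d := by
  have htend := hasDerivAt_iff_tendsto_slope.mp hg
  have htend2 : Filter.Tendsto (slope g a) (nhdsWithin a (Set.Iio a)) (nhds d) :=
    htend.mono_left (nhdsWithin_mono a (fun x hx => ne_of_lt hx))
  refine ge_of_tendsto htend2 ?_
  filter_upwards [Ioo_mem_nhdsLT ha] with s hs
  have h1 : g s ≤ g a := hmax s ⟨hs.1.le, hs.2.le⟩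
  have h2 : s - a < 0 := by linarith [hs.2]
  rw [slope_def_field]
  rw [div_nonneg_iff]
  right
  constructor <;> linarith

lemma crossOrth (a b : Fin 3 → ℝ) : ∑ c, a c * (crossProduct a b) c = 0 := by
  simp [crossProduct, Fin.sum_univ_three]
  ring

lemma dirSecond_nonpos {m : ℕ} {u : (Fin m → ℝ) → (Fin 3 → ℝ)} (hu : ContDiff ℝ (⊤:ℕ∞) u)
    (x v : Fin m → ℝ)
    (hmax : ∀ y, ∑ c, u y c ^ 2 ≤ ∑ c, u x c ^ 2) :
    ∑ c, u x c * fderiv ℝ (fun y => fderiv ℝ u y v) x v c ≤ 0 := by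
  set L : ℝ → Fin m → ℝ := fun r => x + r • v with hLdef
  have hL0 : L 0 = x := by simp [hLdef]
  have hL : ∀ r, HasDerivAt L v r := by
    intro r
    have h := (((hasDerivAt_id r).smul_const v).const_add x)
    rw [one_smul] at h
    exact h
  have hLC : ContDiff ℝ (⊤:ℕ∞) L := contDiff_const.add (contDiff_id.smul contDiff_const)
  set w : (Fin m → ℝ) → Fin 3 → ℝ := fun y => fderiv ℝ u y v with hwdef
  have hw : ContDiff ℝ (⊤:ℕ∞) w := (hu.fderiv_right (le_refl _)).clm_apply contDiff_const
  have hgc : ∀ r, HasDerivAt (fun r => u (L r)) (w (L r)) r := by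
    intro r
    exact (hu.differentiable (by simp) (L r)).hasFDerivAt.comp_hasDerivAt r (hL r)
  have hgcc : ∀ (c : Fin 3) r, HasDerivAt (fun r => u (L r) c) (w (L r) c) r := by
    intro c r
    exact (ContinuousLinearMap.proj (R := ℝ) (φ := fun _ : Fin 3 => ℝ) c).hasFDerivAt.comp_hasDerivAt r (hgc r)
  have hwc : ∀ r, HasDerivAt (fun r => w (L r)) (fderiv ℝ w (L r) v) r := by
    intro r
    exact (hw.differentiable (by simp) (L r)).hasFDerivAt.comp_hasDerivAt r (hL r)
  have hwcc : ∀ (c : Fin 3) r, HasDerivAt (fun r => w (L r) c) (fderiv ℝ w (L r) v c) r := by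
    intro c r
    exact (ContinuousLinearMap.proj (R := ℝ) (φ := fun _ : Fin 3 => ℝ) c).hasFDerivAt.comp_hasDerivAt r (hwc r)
  set ψ : ℝ → ℝ := fun r => ∑ c, u (L r) c ^ 2 with hψdef
  have hψ : ContDiff ℝ (⊤:ℕ∞) ψ := by
    apply ContDiff.sum
    intro c _
    exact ((ContinuousLinearMap.proj (R := ℝ) (φ := fun _ : Fin 3 => ℝ) c).contDiff.comp
      (hu.comp hLC)).pow 2
  have hDψ : ∀ r, HasDerivAt ψ (∑ c, 2 * u (L r) c * w (L r) c) r := by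
    intro r
    have := HasDerivAt.fun_sum (fun c (_ : c ∈ Finset.univ) => (hgcc c r).pow 2)
    simpa using this
  have hψ1 : deriv ψ = fun r => ∑ c, 2 * u (L r) c * w (L r) c := by
    funext r; exact (hDψ r).deriv
  have hD2 : HasDerivAt (fun r => ∑ c, 2 * u (L r) c * w (L r) c)
      (∑ c, (2 * w x c * w x c + 2 * u x c * fderiv ℝ w x v c)) 0 := by
    have key : ∀ c : Fin 3, HasDerivAt (fun r => (2 * u (L r) c) * w (L r) c)
        (2 * w x c * w x c + 2 * u x c * fderiv ℝ w x v c) 0 := by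
      intro c
      have hA : HasDerivAt (fun r => 2 * u (L r) c) (2 * w x c) 0 := by
        have := (hgcc c 0).const_mul 2
        rwa [hL0] at this
      have hB : HasDerivAt (fun r => w (L r) c) (fderiv ℝ w x v c) 0 := by
        have := hwcc c 0
        rwa [hL0] at this
      have := hA.mul hB
      rw [hL0] at this
      exact this
    have := HasDerivAt.fun_sum (fun c (_ : c ∈ Finset.univ) => key c)
    simpa [mul_assoc] using this
  have hmaxψ : ∀ r, ψ r ≤ ψ 0 := by
    intro r
    simp only [hψdef, hL0]
    exact hmax (L r)
  have htest := secondDerivTest hψ hmaxψ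
  rw [hψ1] at htest
  rw [hD2.deriv] at htest
  have hsplit : ∑ c, (2 * w x c * w x c + 2 * u x c * fderiv ℝ w x v c)
      = (∑ c, 2 * w x c * w x c) + 2 * ∑ c, u x c * fderiv ℝ w x v c := by
    rw [Finset.sum_add_distrib, Finset.mul_sum]
    congr 1
    apply Finset.sum_congr rfl
    intro c _; ring
  rw [hsplit] at htest
  have hnn : 0 ≤ ∑ c, 2 * w x c * w x c := by
    apply Finset.sum_nonneg
    intro c _
    nlinarith [sq_nonneg (w x c)]
  linarith

noncomputable def LLBf (m : ℕ) (V : ℝ → (Fin m → ℝ) → (Fin 3 → ℝ)) (s : ℝ) (x : Fin m → ℝ) : ℝ :=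
  ∑ c, V s x c ^ 2

/-- For a smooth periodic solution `V` of the LLB equation on `[0,T]` over `ℝ^m`, the sup
norm is nonincreasing: for `t ∈ [0,T]`, `sup_x |V(t,x)| ≤ sup_x |V(0,x)|`. -/
theorem llb_sup_decreasing (m : ℕ) (hm : 1 ≤ m) (lam mu T : ℝ)
    (hlam : 0 < lam) (hmu : 0 < mu) (hT : 0 < T)
    (V : ℝ → (Fin m → ℝ) → (Fin 3 → ℝ)) (hV : IsLLB m lam mu T V)
    (t : ℝ) (ht : t ∈ Set.Icc (0 : ℝ) T) :
    supnorm m (V t) ≤ supnorm m (V 0) := by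
  obtain ⟨hW, hper, heq⟩ := hV
  have hW' : ContDiff ℝ (⊤:ℕ∞) (fun p : ℝ × (Fin m → ℝ) => V p.1 p.2) :=
    hW.of_le (by simp)
  have h1top : (1 : WithTop ℕ∞) ≤ (⊤:ℕ∞) := by exact_mod_cast le_top
  -- spatial smoothness
  have hu : ∀ s : ℝ, ContDiff ℝ (⊤:ℕ∞) (V s) := by
    intro s
    have := hW'.comp (ContDiff.prodMk (contDiff_const (c := s)) contDiff_id)
    exact this
  -- periodic reduction to the cube
  have hreduce : ∀ x : Fin m → ℝ, ∃ z ∈ cube m, ∀ s, V s z = V s x := by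
    intro x
    refine ⟨fun i => Int.fract (x i), ?_, ?_⟩
    · exact Set.mem_Icc.mpr ⟨fun i => Int.fract_nonneg _, fun i => (Int.fract_lt_one _).le⟩
    · intro s
      have hx : ((fun i => Int.fract (x i)) + fun i => ((⌊x i⌋ : ℤ) : ℝ)) = x := by
        funext i
        exact Int.fract_add_floor (x i)
      calc V s (fun i => Int.fract (x i))
          = V s ((fun i => Int.fract (x i)) + fun i => ((⌊x i⌋ : ℤ) : ℝ)) :=
            (hper s _ _).symm
        _ = V s x := by rw [hx]
  -- time derivative of LLBf
  have hcurve : ∀ (x : Fin m → ℝ) (s : ℝ),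
      HasDerivAt (fun s' => V s' x) (deriv (fun s' => V s' x) s) s := by
    intro x s
    have hdiff : Differentiable ℝ (fun s' : ℝ => V s' x) := by
      have := (hW'.differentiable (by simp)).comp
        ((differentiable_id (𝕜 := ℝ)).prodMk (differentiable_const x))
      exact this
    exact (hdiff s).hasDerivAt
  have hft : ∀ (x : Fin m → ℝ) (s : ℝ),
      HasDerivAt (fun s' => LLBf m V s' x)
        (∑ c, 2 * V s x c * deriv (fun s' => V s' x) s c) s := by
    intro x s
    have hc : ∀ c : Fin 3, HasDerivAt (fun s' => V s' x c)
        (deriv (fun s' => V s' x) s c) s := by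
      intro c
      exact (ContinuousLinearMap.proj (R := ℝ) (φ := fun _ : Fin 3 => ℝ)
        c).hasFDerivAt.comp_hasDerivAt s (hcurve x s)
    have := HasDerivAt.fun_sum (fun c (_ : c ∈ Finset.univ) => (hc c).pow 2)
    simpa [LLBf, mul_assoc] using this
  -- continuity of LLBf uncurried
  have hfC : Continuous (fun p : ℝ × (Fin m → ℝ) => LLBf m V p.1 p.2) := by
    apply continuous_finset_sum
    intro c _
    exact ((continuous_apply c).comp hW'.continuous).pow 2
  -- maximizer of f 0 on cube
  have hcubeC : IsCompact (cube m) := isCompact_Icc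
  have hcubeNe : (cube m).Nonempty := ⟨0, Set.left_mem_Icc.mpr zero_le_one⟩
  obtain ⟨x₀, hx₀c, hx₀max⟩ := hcubeC.exists_isMaxOn hcubeNe
    ((hfC.comp (Continuous.prodMk_right (0:ℝ))).continuousOn :
      ContinuousOn (fun x => LLBf m V 0 x) (cube m))
  -- key estimate
  have key : ∀ ε > (0:ℝ), ∀ s ∈ Set.Icc 0 t, ∀ x : Fin m → ℝ,
      LLBf m V s x - ε * s ≤ LLBf m V 0 x₀ := by
    intro ε hε s hs x
    set G : ℝ × (Fin m → ℝ) → ℝ := fun p => LLBf m V p.1 p.2 - ε * p.1 with hGdef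
    have hGC : Continuous G := hfC.sub (continuous_const.mul continuous_fst)
    set K : Set (ℝ × (Fin m → ℝ)) := (Set.Icc 0 t) ×ˢ (cube m) with hKdef
    have hKc : IsCompact K := (isCompact_Icc).prod hcubeC
    have hKne : K.Nonempty := ⟨(0, 0), ⟨Set.left_mem_Icc.mpr ht.1, Set.left_mem_Icc.mpr zero_le_one⟩⟩
    obtain ⟨⟨sst, xst⟩, hpK, hpmax⟩ := hKc.exists_isMaxOn hKne hGC.continuousOn
    have hsst : sst ∈ Set.Icc 0 t := hpK.1
    have hxst : xst ∈ cube m := hpK.2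
    -- global spatial max at time sst
    have hglob : ∀ y, LLBf m V sst y ≤ LLBf m V sst xst := by
      intro y
      obtain ⟨z, hz, hzy⟩ := hreduce y
      have h1 : LLBf m V sst y = LLBf m V sst z := by
        simp only [LLBf, hzy sst]
      have h2 : G (sst, z) ≤ G (sst, xst) := hpmax ⟨hsst, hz⟩
      simp only [hGdef] at h2
      linarith
    have hsst0 : sst = 0 := by
      by_contra hne
      have hspos : 0 < sst := lt_of_le_of_ne hsst.1 (Ne.symm hne)
      have hstT : sst ∈ Set.Icc 0 T := ⟨hsst.1, hsst.2.trans ht.2⟩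
      -- time derivative bound
      have hgd : HasDerivAt (fun s' => LLBf m V s' xst - ε * s')
          ((∑ c, 2 * V sst xst c * deriv (fun s' => V s' xst) sst c) - ε) sst := by
        have := (hft xst sst).fun_sub ((hasDerivAt_id sst).const_mul ε)
        simpa using this
      have hgmax : ∀ s' ∈ Set.Icc 0 sst,
          (fun s'' => LLBf m V s'' xst - ε * s'') s' ≤
          (fun s'' => LLBf m V s'' xst - ε * s'') sst := by
        intro s' hs'
        have hmem : ((s', xst) : ℝ × (Fin m → ℝ)) ∈ K :=
          ⟨⟨hs'.1, hs'.2.trans hsst.2⟩, hxst⟩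
        exact hpmax hmem
      have hεle : ε ≤ ∑ c, 2 * V sst xst c * deriv (fun s' => V s' xst) sst c := by
        have := leftDerivTest hspos hgd hgmax
        linarith
      -- now bound the RHS above by 0
      set Vv := V sst xst with hVvdef
      set Lp := lap m (V sst) xst with hLpdef
      have hDt : deriv (fun s' => V s' xst) sst =
          Lp + crossProduct Vv Lp - (lam * (1 + mu * ∑ c, Vv c ^ 2)) • Vv :=
        heq sst hstT xst
      have hS : (∑ c, 2 * Vv c * deriv (fun s' => V s' xst) sst c)
          = 2 * (∑ c, Vv c * Lp c) + 2 * (∑ c, Vv c * crossProduct Vv Lp c)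
            - 2 * (lam * (1 + mu * ∑ c, Vv c ^ 2)) * ∑ c, Vv c ^ 2 := by
        rw [hDt]
        have e1 : ∀ c : Fin 3, 2 * Vv c *
            (Lp + crossProduct Vv Lp - (lam * (1 + mu * ∑ c', Vv c' ^ 2)) • Vv) c
            = 2 * (Vv c * Lp c) + 2 * (Vv c * crossProduct Vv Lp c)
              - (2 * (lam * (1 + mu * ∑ c', Vv c' ^ 2))) * Vv c ^ 2 := by
          intro c
          simp only [Pi.add_apply, Pi.sub_apply, Pi.smul_apply, smul_eq_mul]
          ring
        rw [Finset.sum_congr rfl (fun c _ => e1 c), Finset.sum_sub_distrib,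
          Finset.sum_add_distrib, ← Finset.mul_sum, ← Finset.mul_sum, ← Finset.mul_sum]
      have hcross : (∑ c, Vv c * crossProduct Vv Lp c) = 0 := crossOrth Vv Lp
      have hlapterm : (∑ c, Vv c * Lp c) ≤ 0 := by
        have hLpc : ∀ c, Lp c = ∑ i : Fin m,
            fderiv ℝ (fun y => fderiv ℝ (V sst) y (Pi.single i 1)) xst (Pi.single i 1) c := by
          intro c
          simp [hLpdef, lap, Finset.sum_apply]
        have h1 : (∑ c, Vv c * Lp c) = ∑ i : Fin m, ∑ c, Vv c *
            fderiv ℝ (fun y => fderiv ℝ (V sst) y (Pi.single i 1)) xst (Pi.single i 1) c := by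
          rw [Finset.sum_comm]
          apply Finset.sum_congr rfl
          intro c _
          rw [hLpc c, Finset.mul_sum]
        rw [h1]
        apply Finset.sum_nonpos
        intro i _
        exact dirSecond_nonpos (hu sst) xst (Pi.single i 1) (fun y => hglob y)
      have hsq : (0:ℝ) ≤ ∑ c, Vv c ^ 2 := Finset.sum_nonneg fun c _ => sq_nonneg _
      have hscal : (0:ℝ) ≤ lam * (1 + mu * ∑ c, Vv c ^ 2) := by
        nlinarith [mul_nonneg hmu.le hsq]
      nlinarith
    -- conclude from sst = 0
    obtain ⟨z, hz, hzy⟩ := hreduce x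
    have hGz : G (s, z) ≤ G (sst, xst) := hpmax ⟨hs, hz⟩
    have hfz : LLBf m V s x = LLBf m V s z := by simp only [LLBf, hzy s]
    have hmax0 : LLBf m V sst xst ≤ LLBf m V 0 x₀ := by
      rw [hsst0]
      exact hx₀max hxst
    have hGz' : LLBf m V s z - ε * s ≤ LLBf m V sst xst - ε * sst := hGz
    rw [hsst0] at hGz' hmax0
    have : LLBf m V s z - ε * s ≤ LLBf m V 0 xst := by linarith [hGz']
    linarith [hmax0, hfz, this]
  -- pointwise bound at time t
  have hfinal : ∀ x, LLBf m V t x ≤ LLBf m V 0 x₀ := by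
    intro x
    rcases eq_or_lt_of_le ht.1 with h0 | htpos
    · obtain ⟨z, hz, hzy⟩ := hreduce x
      have : LLBf m V t x = LLBf m V 0 z := by
        simp only [LLBf, ← h0, hzy 0]
      rw [this]
      exact hx₀max hz
    · refine le_of_forall_pos_le_add ?_
      intro ε hε
      have := key (ε / t) (by positivity) t ⟨ht.1, le_refl t⟩ x
      have ht' : (ε / t) * t = ε := by field_simp
      linarith
  -- wrap up with sup
  have hbound0 : ∀ x, Real.sqrt (∑ c, V 0 x c ^ 2) ≤ Real.sqrt (LLBf m V 0 x₀) := by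
    intro x
    apply Real.sqrt_le_sqrt
    obtain ⟨z, hz, hzy⟩ := hreduce x
    have : (∑ c, V 0 x c ^ 2) = LLBf m V 0 z := by simp only [LLBf, hzy 0]
    rw [this]
    exact hx₀max hz
  have hboundt : ∀ x, Real.sqrt (∑ c, V t x c ^ 2) ≤ Real.sqrt (LLBf m V 0 x₀) := by
    intro x
    exact Real.sqrt_le_sqrt (hfinal x)
  calc supnorm m (V t) ≤ Real.sqrt (LLBf m V 0 x₀) := ciSup_le hboundt
    _ ≤ supnorm m (V 0) := by
        have hb : BddAbove (Set.range fun x : Fin m → ℝ => Real.sqrt (∑ c, V 0 x c ^ 2)) :=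
          ⟨Real.sqrt (LLBf m V 0 x₀), by rintro y ⟨x, rfl⟩; exact hbound0 x⟩
        have h2 := le_ciSup hb x₀
        exact le_trans (le_of_eq rfl) h2
end

section
/- Let V₁ and V₂ be smooth periodic solutions of the LLB equation on [0, T] over ℝ^m. If V₁(0, x) = V₂(0, x) for all x ∈ ℝ^m, then V₁(t, x) = V₂(t, x) for all (t, x) ∈ [0, T] × ℝ^m. -/
open MeasureTheory

open MeasureTheory


section infra
variable {m : ℕ} {Y : Type*} [NormedAddCommGroup Y] [NormedSpace ℝ Y]

/-- Directional (partial) derivative of a joint function along a fixed vector. -/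
noncomputable def pd (v : ℝ × (Fin m → ℝ)) (F : ℝ × (Fin m → ℝ) → Y)
    (p : ℝ × (Fin m → ℝ)) : Y := fderiv ℝ F p v

theorem contDiff_pd (v : ℝ × (Fin m → ℝ)) {F : ℝ × (Fin m → ℝ) → Y}
    (hF : ContDiff ℝ (⊤ : ℕ∞) F) : ContDiff ℝ (⊤ : ℕ∞) (pd v F) :=
  (hF.fderiv_right (by simp)).clm_apply contDiff_const

theorem hasFDerivAt_slice {F : ℝ × (Fin m → ℝ) → Y} (hF : ContDiff ℝ (⊤ : ℕ∞) F)
    (t : ℝ) (x : Fin m → ℝ) :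
    HasFDerivAt (fun y => F (t, y))
      ((fderiv ℝ F (t, x)).comp (ContinuousLinearMap.inr ℝ ℝ (Fin m → ℝ))) x := by
  have h1 : HasFDerivAt F (fderiv ℝ F (t, x)) (t, x) :=
    (hF.differentiable (by simp) (t, x)).hasFDerivAt
  have h2 : HasFDerivAt (fun y : Fin m → ℝ => ((t, y) : ℝ × (Fin m → ℝ)))
      (ContinuousLinearMap.inr ℝ ℝ (Fin m → ℝ)) x :=
    (hasFDerivAt_const t x).prodMk (hasFDerivAt_id x)
  exact h1.comp x h2

theorem fderiv_slice {F : ℝ × (Fin m → ℝ) → Y} (hF : ContDiff ℝ (⊤ : ℕ∞) F)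
    (t : ℝ) (x : Fin m → ℝ) (v : Fin m → ℝ) :
    fderiv ℝ (fun y => F (t, y)) x v = pd (0, v) F (t, x) := by
  rw [(hasFDerivAt_slice hF t x).fderiv]; rfl

theorem hasDerivAt_slice {F : ℝ × (Fin m → ℝ) → Y} (hF : ContDiff ℝ (⊤ : ℕ∞) F)
    (t : ℝ) (x : Fin m → ℝ) :
    HasDerivAt (fun s => F (s, x)) (pd (1, 0) F (t, x)) t := by
  have h1 : HasFDerivAt F (fderiv ℝ F (t, x)) (t, x) :=
    (hF.differentiable (by simp) (t, x)).hasFDerivAt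
  have h2 : HasDerivAt (fun s : ℝ => ((s, x) : ℝ × (Fin m → ℝ))) (1, 0) t := by
    have := ((hasDerivAt_id t).prodMk (hasDerivAt_const t x))
    simpa using this
  simpa [pd, Function.comp_def] using h1.comp_hasDerivAt t h2

theorem lap_slice_eq {F : ℝ × (Fin m → ℝ) → Fin 3 → ℝ} (hF : ContDiff ℝ (⊤ : ℕ∞) F)
    (t : ℝ) (x : Fin m → ℝ) :
    lap m (fun y => F (t, y)) x
      = ∑ i : Fin m, pd (0, Pi.single i 1) (pd (0, Pi.single i 1) F) (t, x) := by
  unfold lap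
  refine Finset.sum_congr rfl fun i _ => ?_
  have hinner : (fun y => fderiv ℝ (fun y' => F (t, y')) y (Pi.single i 1))
      = fun y => pd (0, Pi.single i 1) F (t, y) := by
    funext y; exact fderiv_slice hF t y (Pi.single i 1)
  rw [hinner]
  exact fderiv_slice (contDiff_pd _ hF) t x (Pi.single i 1)

end infra

section infra2
variable {m : ℕ} {Y : Type*} [NormedAddCommGroup Y] [NormedSpace ℝ Y]

theorem fderiv_shift_eq {F : ℝ × (Fin m → ℝ) → Y} (hF : ContDiff ℝ (⊤ : ℕ∞) F)
    (hFc : (fun q => F (q + c)) = F) (p : ℝ × (Fin m → ℝ)) :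
    fderiv ℝ F (p + c) = fderiv ℝ F p := by
  have h1 : HasFDerivAt (fun q : ℝ × (Fin m → ℝ) => q + c)
      (ContinuousLinearMap.id ℝ _) p := by
    simpa using (hasFDerivAt_id p).add_const c
  have h2 : HasFDerivAt (fun q => F (q + c)) (fderiv ℝ F (p + c)) p := by
    have := ((hF.differentiable (by simp) (p + c)).hasFDerivAt).comp p h1
    simpa [Function.comp_def] using this
  rw [hFc] at h2
  exact (h2.fderiv).symm ▸ rfl

theorem pd_periodic {F : ℝ × (Fin m → ℝ) → Y} (hF : ContDiff ℝ (⊤ : ℕ∞) F)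
    (hper : ∀ (t : ℝ) (x : Fin m → ℝ) (k : Fin m → ℤ),
      F (t, x + fun i => (k i : ℝ)) = F (t, x))
    (v : ℝ × (Fin m → ℝ)) :
    ∀ (t : ℝ) (x : Fin m → ℝ) (k : Fin m → ℤ),
      pd v F (t, x + fun i => (k i : ℝ)) = pd v F (t, x) := by
  intro t x k
  set c : ℝ × (Fin m → ℝ) := (0, fun i => (k i : ℝ)) with hc
  have hFc : (fun q => F (q + c)) = F := by
    funext q
    have : q + c = (q.1, q.2 + fun i => (k i : ℝ)) := by
      ext <;> simp [hc]
    rw [this, hper]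
  have key := fderiv_shift_eq hF hFc (t, x)
  have hpt : (t, x) + c = (t, x + fun i => (k i : ℝ)) := by ext <;> simp [hc]
  unfold pd
  rw [← hpt, key]

/-- Component derivative CLM of a slice. -/
noncomputable def cD (U : ℝ × (Fin m → ℝ) → Fin 3 → ℝ) (t : ℝ) (x : Fin m → ℝ)
    (c : Fin 3) : (Fin m → ℝ) →L[ℝ] ℝ :=
  (ContinuousLinearMap.proj c).comp
    ((fderiv ℝ U (t, x)).comp (ContinuousLinearMap.inr ℝ ℝ (Fin m → ℝ)))

theorem hasFDerivAt_cD {U : ℝ × (Fin m → ℝ) → Fin 3 → ℝ} (hU : ContDiff ℝ (⊤ : ℕ∞) U)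
    (t : ℝ) (x : Fin m → ℝ) (c : Fin 3) :
    HasFDerivAt (fun y => U (t, y) c) (cD U t x c) x :=
  (ContinuousLinearMap.proj (R := ℝ) (φ := fun _ : Fin 3 => ℝ)
    c).hasFDerivAt.comp x (hasFDerivAt_slice hU t x)

theorem cD_apply (U : ℝ × (Fin m → ℝ) → Fin 3 → ℝ) (t : ℝ) (x : Fin m → ℝ)
    (c : Fin 3) (v : Fin m → ℝ) :
    cD U t x c v = pd (0, v) U (t, x) c := rfl

theorem hasDerivAt_slice_comp {U : ℝ × (Fin m → ℝ) → Fin 3 → ℝ} (hU : ContDiff ℝ (⊤ : ℕ∞) U)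
    (t : ℝ) (x : Fin m → ℝ) (c : Fin 3) :
    HasDerivAt (fun s => U (s, x) c) (pd (1, 0) U (t, x) c) t :=
  (ContinuousLinearMap.proj (R := ℝ) (φ := fun _ : Fin 3 => ℝ)
    c).hasFDerivAt.comp_hasDerivAt t (hasDerivAt_slice hU t x)

end infra2

section energy
variable {m : ℕ}
open Set

theorem hasDerivAt_energy (G : ℝ × (Fin m → ℝ) → ℝ) (hG : ContDiff ℝ (⊤ : ℕ∞) G) (t₀ : ℝ) :
    HasDerivAt (fun t => ∫ x in Icc (0 : Fin m → ℝ) 1, G (t, x))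
      (∫ x in Icc (0 : Fin m → ℝ) 1, pd (1, 0) G (t₀, x)) t₀ := by
  have hGc : Continuous G := hG.continuous
  have hG'c : Continuous fun p : ℝ × (Fin m → ℝ) => pd (1, 0) G p :=
    (contDiff_pd _ hG).continuous
  have hK : IsCompact (Icc (t₀ - 1) (t₀ + 1) ×ˢ Icc (0 : Fin m → ℝ) 1) :=
    isCompact_Icc.prod isCompact_Icc
  obtain ⟨C, hC⟩ := hK.exists_bound_of_continuousOn hG'c.continuousOn
  have main := hasDerivAt_integral_of_dominated_loc_of_deriv_le (F := fun t x => G (t, x))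
    (F' := fun t x => pd (1, 0) G (t, x)) (μ := volume.restrict (Icc (0 : Fin m → ℝ) 1))
    (bound := fun _ => C) (x₀ := t₀) (s := Metric.ball t₀ 1) (Metric.ball_mem_nhds t₀ one_pos)
    (Filter.Eventually.of_forall fun t =>
      (hGc.comp (Continuous.prodMk_right t)).aestronglyMeasurable)
    ((hGc.comp (Continuous.prodMk_right t₀)).continuousOn.integrableOn_compact isCompact_Icc)
    ((hG'c.comp (Continuous.prodMk_right t₀)).aestronglyMeasurable)
    ?_ ?_ ?_
  · exact main.2
  · refine (ae_restrict_iff' measurableSet_Icc).2 (Filter.Eventually.of_forall ?_)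
    intro x hx t ht
    refine hC (t, x) ⟨?_, hx⟩
    rw [Metric.mem_ball, Real.dist_eq] at ht
    constructor <;> [linarith [abs_le.1 ht.le |>.1]; linarith [abs_le.1 ht.le |>.2]]
  · exact integrableOn_const isCompact_Icc.measure_lt_top.ne
  · exact Filter.Eventually.of_forall fun x => fun t _ => hasDerivAt_slice hG t x

end energy

open MeasureTheory


noncomputable def dot3 (a b : Fin 3 → ℝ) : ℝ := ∑ c, a c * b c

lemma crossP_apply (u v : Fin 3 → ℝ) :
    crossProduct u v = ![u 1 * v 2 - u 2 * v 1, u 2 * v 0 - u 0 * v 2,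
      u 0 * v 1 - u 1 * v 0] := by
  simp [crossProduct]

section toolkit
variable {m : ℕ} {Y : Type*} [NormedAddCommGroup Y] [NormedSpace ℝ Y]
variable {U W : ℝ × (Fin m → ℝ) → Fin 3 → ℝ} {f g : ℝ × (Fin m → ℝ) → ℝ}
variable (v q : ℝ × (Fin m → ℝ))

theorem pd_compc (hU : ContDiff ℝ (⊤ : ℕ∞) U) (c : Fin 3) :
    pd v (fun p => U p c) q = pd v U q c := by
  unfold pd
  have h := ((ContinuousLinearMap.proj (R := ℝ) (φ := fun _ : Fin 3 => ℝ)
    c).hasFDerivAt.comp q (hU.differentiable (by simp) q).hasFDerivAt).fderiv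
  rw [show (fun p => U p c) = ((ContinuousLinearMap.proj (R := ℝ)
    (φ := fun _ : Fin 3 => ℝ) c) ∘ U) from rfl, h]
  rfl

theorem pd_mul (hf : ContDiff ℝ (⊤ : ℕ∞) f) (hg : ContDiff ℝ (⊤ : ℕ∞) g) :
    pd v (fun p => f p * g p) q = f q * pd v g q + g q * pd v f q := by
  unfold pd
  rw [fderiv_fun_mul (hf.differentiable (by simp) q) (hg.differentiable (by simp) q)]
  simp [mul_comm]

theorem pd_const_mul (hf : ContDiff ℝ (⊤ : ℕ∞) f) (a : ℝ) :
    pd v (fun p => a * f p) q = a * pd v f q := by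
  unfold pd
  rw [fderiv_const_mul (hf.differentiable (by simp) q)]
  simp

theorem pd_sum {ι : Type*} (s : Finset ι) (F : ι → ℝ × (Fin m → ℝ) → Y)
    (hF : ∀ i, ContDiff ℝ (⊤ : ℕ∞) (F i)) :
    pd v (fun p => ∑ i ∈ s, F i p) q = ∑ i ∈ s, pd v (F i) q := by
  unfold pd
  rw [fderiv_fun_sum (fun i _ => (hF i).differentiable (by simp) q)]
  simp

theorem pd_add {A B : ℝ × (Fin m → ℝ) → Y} (hA : ContDiff ℝ (⊤ : ℕ∞) A) (hB : ContDiff ℝ (⊤ : ℕ∞) B) :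
    pd v (fun p => A p + B p) q = pd v A q + pd v B q := by
  unfold pd
  rw [fderiv_fun_add (hA.differentiable (by simp) q) (hB.differentiable (by simp) q)]
  simp

theorem pd_sub {A B : ℝ × (Fin m → ℝ) → Y} (hA : ContDiff ℝ (⊤ : ℕ∞) A) (hB : ContDiff ℝ (⊤ : ℕ∞) B) :
    pd v (fun p => A p - B p) q = pd v A q - pd v B q := by
  unfold pd
  rw [fderiv_fun_sub (hA.differentiable (by simp) q) (hB.differentiable (by simp) q)]
  simp

theorem contDiff_dot3 (hU : ContDiff ℝ (⊤ : ℕ∞) U) (hW : ContDiff ℝ (⊤ : ℕ∞) W) :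
    ContDiff ℝ (⊤ : ℕ∞) (fun p => dot3 (U p) (W p)) := by
  unfold dot3
  exact ContDiff.sum fun c _ => (contDiff_pi.1 hU c).mul (contDiff_pi.1 hW c)

theorem contDiff_cross (hU : ContDiff ℝ (⊤ : ℕ∞) U) (hW : ContDiff ℝ (⊤ : ℕ∞) W) :
    ContDiff ℝ (⊤ : ℕ∞) (fun p => crossProduct (U p) (W p)) := by
  have hU' := fun c => contDiff_pi.1 hU c
  have hW' := fun c => contDiff_pi.1 hW c
  rw [show (fun p => crossProduct (U p) (W p)) = fun p =>
    ![U p 1 * W p 2 - U p 2 * W p 1, U p 2 * W p 0 - U p 0 * W p 2,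
      U p 0 * W p 1 - U p 1 * W p 0] from funext fun p => crossP_apply _ _]
  apply contDiff_pi.2
  intro c
  fin_cases c <;> simp <;>
    [exact ((hU' 1).mul (hW' 2)).sub ((hU' 2).mul (hW' 1));
     exact ((hU' 2).mul (hW' 0)).sub ((hU' 0).mul (hW' 2));
     exact ((hU' 0).mul (hW' 1)).sub ((hU' 1).mul (hW' 0))]

theorem pd_dot3 (hU : ContDiff ℝ (⊤ : ℕ∞) U) (hW : ContDiff ℝ (⊤ : ℕ∞) W) :
    pd v (fun p => dot3 (U p) (W p)) q
      = dot3 (pd v U q) (W q) + dot3 (U q) (pd v W q) := by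
  have h1 : pd v (fun p => dot3 (U p) (W p)) q
      = ∑ c, pd v (fun p => U p c * W p c) q := by
    rw [show (fun p => dot3 (U p) (W p)) = fun p => ∑ c, U p c * W p c from rfl]
    exact pd_sum v q _ _ fun c => (contDiff_pi.1 hU c).mul (contDiff_pi.1 hW c)
  rw [h1]
  have h2 : ∀ c : Fin 3, pd v (fun p => U p c * W p c) q
      = U q c * pd v W q c + W q c * pd v U q c := by
    intro c
    rw [pd_mul v q (contDiff_pi.1 hU c) (contDiff_pi.1 hW c),
      pd_compc v q hU c, pd_compc v q hW c]
  rw [Finset.sum_congr rfl fun c _ => h2 c]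
  simp only [dot3, Fin.sum_univ_three]
  ring

theorem pd_cross (hU : ContDiff ℝ (⊤ : ℕ∞) U) (hW : ContDiff ℝ (⊤ : ℕ∞) W) :
    pd v (fun p => crossProduct (U p) (W p)) q
      = crossProduct (pd v U q) (W q) + crossProduct (U q) (pd v W q) := by
  have hX : ContDiff ℝ (⊤ : ℕ∞) (fun p => crossProduct (U p) (W p)) := contDiff_cross hU hW
  have hU' := fun c => contDiff_pi.1 hU c
  have hW' := fun c => contDiff_pi.1 hW c
  have heq0 : (fun p => crossProduct (U p) (W p) 0)
      = fun p => U p 1 * W p 2 - U p 2 * W p 1 := by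
    funext p; rw [crossP_apply]; simp
  have heq1 : (fun p => crossProduct (U p) (W p) 1)
      = fun p => U p 2 * W p 0 - U p 0 * W p 2 := by
    funext p; rw [crossP_apply]; simp
  have heq2 : (fun p => crossProduct (U p) (W p) 2)
      = fun p => U p 0 * W p 1 - U p 1 * W p 0 := by
    funext p; rw [crossP_apply]; simp
  have L0 : pd v (fun p => crossProduct (U p) (W p) 0) q
      = U q 1 * pd v W q 2 + W q 2 * pd v U q 1
        - (U q 2 * pd v W q 1 + W q 1 * pd v U q 2) := by
    rw [heq0, pd_sub v q ((hU' 1).mul (hW' 2)) ((hU' 2).mul (hW' 1)),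
      pd_mul v q (hU' 1) (hW' 2), pd_mul v q (hU' 2) (hW' 1),
      pd_compc v q hU, pd_compc v q hU, pd_compc v q hW, pd_compc v q hW]
  have L1 : pd v (fun p => crossProduct (U p) (W p) 1) q
      = U q 2 * pd v W q 0 + W q 0 * pd v U q 2
        - (U q 0 * pd v W q 2 + W q 2 * pd v U q 0) := by
    rw [heq1, pd_sub v q ((hU' 2).mul (hW' 0)) ((hU' 0).mul (hW' 2)),
      pd_mul v q (hU' 2) (hW' 0), pd_mul v q (hU' 0) (hW' 2),
      pd_compc v q hU, pd_compc v q hU, pd_compc v q hW, pd_compc v q hW]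
  have L2 : pd v (fun p => crossProduct (U p) (W p) 2) q
      = U q 0 * pd v W q 1 + W q 1 * pd v U q 0
        - (U q 1 * pd v W q 0 + W q 0 * pd v U q 1) := by
    rw [heq2, pd_sub v q ((hU' 0).mul (hW' 1)) ((hU' 1).mul (hW' 0)),
      pd_mul v q (hU' 0) (hW' 1), pd_mul v q (hU' 1) (hW' 0),
      pd_compc v q hU, pd_compc v q hU, pd_compc v q hW, pd_compc v q hW]
  funext c
  rw [← pd_compc v q hX c]
  fin_cases c
  · show pd v (fun p => crossProduct (U p) (W p) 0) q
      = (crossProduct (pd v U q) (W q) + crossProduct (U q) (pd v W q)) 0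
    rw [L0]
    simp only [Pi.add_apply, crossP_apply]
    simp
    ring
  · show pd v (fun p => crossProduct (U p) (W p) 1) q
      = (crossProduct (pd v U q) (W q) + crossProduct (U q) (pd v W q)) 1
    rw [L1]
    simp only [Pi.add_apply, crossP_apply]
    simp
    ring
  · show pd v (fun p => crossProduct (U p) (W p) 2) q
      = (crossProduct (pd v U q) (W q) + crossProduct (U q) (pd v W q)) 2
    rw [L2]
    simp only [Pi.add_apply, crossP_apply]
    simp
    ring

end toolkit

section dot3lemmas
lemma dot3_comm (a b : Fin 3 → ℝ) : dot3 a b = dot3 b a := by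
  unfold dot3; exact Finset.sum_congr rfl fun c _ => mul_comm _ _

lemma dot3_sum_right {ι : Type*} (s : Finset ι) (a : Fin 3 → ℝ) (f : ι → Fin 3 → ℝ) :
    dot3 a (∑ i ∈ s, f i) = ∑ i ∈ s, dot3 a (f i) := by
  unfold dot3
  rw [Finset.sum_comm]
  exact Finset.sum_congr rfl fun c _ => by rw [Finset.sum_apply, Finset.mul_sum]

lemma dot3_self_nonneg (a : Fin 3 → ℝ) : 0 ≤ dot3 a a :=
  Finset.sum_nonneg fun c _ => mul_self_nonneg _

lemma dot3_self_cross (a z : Fin 3 → ℝ) : dot3 a (crossProduct a z) = 0 := by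
  simp [dot3, crossP_apply, Fin.sum_univ_three]
  ring
end dot3lemmas




lemma dot3_cross_self (a u : Fin 3 → ℝ) : dot3 a (crossProduct u a) = 0 := by
  simp [dot3, crossP_apply, Fin.sum_univ_three]
  ring

lemma abs_prod_bound (B a u b : ℝ) (hu : |u| ≤ B) : 2 * (a * u * b) ≤ b ^ 2 + B ^ 2 * a ^ 2 ∧
    -(2 * (a * u * b)) ≤ b ^ 2 + B ^ 2 * a ^ 2 := by
  have h1 : |2 * (a * u * b)| ≤ 2 * B * (|a| * |b|) := by
    rw [abs_mul, abs_mul, abs_mul]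
    have : |a| * |u| * |b| ≤ |a| * B * |b| := by
      apply mul_le_mul_of_nonneg_right _ (abs_nonneg b)
      exact mul_le_mul_of_nonneg_left hu (abs_nonneg a)
    calc |2| * (|a| * |u| * |b|) ≤ |2| * (|a| * B * |b|) := by
          apply mul_le_mul_of_nonneg_left this (abs_nonneg 2)
      _ = 2 * B * (|a| * |b|) := by rw [abs_two]; ring
  have h2 : 2 * B * (|a| * |b|) ≤ b ^ 2 + B ^ 2 * a ^ 2 := by
    nlinarith [sq_nonneg (|b| - B * |a|), sq_abs a, sq_abs b, abs_nonneg a, abs_nonneg b]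
  constructor
  · linarith [le_abs_self (2 * (a * u * b))]
  · linarith [neg_abs_le (2 * (a * u * b))]

lemma ptwise1 (B : ℝ) (a b u : Fin 3 → ℝ) (hu : ∀ c, |u c| ≤ B) :
    -(2 * dot3 b b) - 2 * dot3 a (crossProduct u b) ≤ 9 * B ^ 2 * dot3 a a := by
  simp only [dot3, crossP_apply, Fin.sum_univ_three]
  have h1 := abs_prod_bound B (a 0) (u 1) (b 2) (hu 1)
  have h2 := abs_prod_bound B (a 0) (u 2) (b 1) (hu 2)
  have h3 := abs_prod_bound B (a 1) (u 2) (b 0) (hu 2)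
  have h4 := abs_prod_bound B (a 1) (u 0) (b 2) (hu 0)
  have h5 := abs_prod_bound B (a 2) (u 0) (b 1) (hu 0)
  have h6 := abs_prod_bound B (a 2) (u 1) (b 0) (hu 1)
  simp only [Matrix.cons_val_zero, Matrix.cons_val_one, Matrix.head_cons,
    Matrix.cons_val_two, Matrix.tail_cons]
  nlinarith [sq_nonneg (a 0), sq_nonneg (a 1), sq_nonneg (a 2), sq_nonneg B]

lemma cauchy3 (C : ℝ) (w z : Fin 3 → ℝ) (hz : ∀ c, |z c| ≤ C) :
    (dot3 w z) ^ 2 ≤ 3 * C ^ 2 * dot3 w w := by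
  simp only [dot3, Fin.sum_univ_three]
  have h0 : (z 0) ^ 2 ≤ C ^ 2 := sq_le_sq' (neg_le_of_abs_le (hz 0)) (le_of_abs_le (hz 0))
  have h1 : (z 1) ^ 2 ≤ C ^ 2 := sq_le_sq' (neg_le_of_abs_le (hz 1)) (le_of_abs_le (hz 1))
  have h2 : (z 2) ^ 2 ≤ C ^ 2 := sq_le_sq' (neg_le_of_abs_le (hz 2)) (le_of_abs_le (hz 2))
  nlinarith [sq_nonneg (w 0 * z 1 - w 1 * z 0), sq_nonneg (w 0 * z 2 - w 2 * z 0),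
    sq_nonneg (w 1 * z 2 - w 2 * z 1), sq_nonneg (w 0), sq_nonneg (w 1), sq_nonneg (w 2)]

lemma ptwise2 (lam mu B : ℝ) (hlam : 0 ≤ lam) (hmu : 0 ≤ mu) (u v : Fin 3 → ℝ)
    (hu : ∀ c, |u c| ≤ B) (hv : ∀ c, |v c| ≤ B) :
    -(2 * lam * dot3 (u - v) ((1 + mu * dot3 u u) • u - (1 + mu * dot3 v v) • v))
      ≤ 15 * lam * mu * B ^ 2 * dot3 (u - v) (u - v) := by
  set w : Fin 3 → ℝ := u - v with hw
  have key : dot3 w ((1 + mu * dot3 u u) • u - (1 + mu * dot3 v v) • v)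
      = (1 + mu * dot3 u u) * dot3 w w + mu * (dot3 w (u + v)) * (dot3 w v) := by
    simp only [dot3, hw, Fin.sum_univ_three, Pi.sub_apply, Pi.add_apply, Pi.smul_apply,
      smul_eq_mul]
    ring
  rw [key]
  have huv : ∀ c, |(u + v) c| ≤ 2 * B := by
    intro c
    calc |(u + v) c| = |u c + v c| := rfl
      _ ≤ |u c| + |v c| := abs_add_le _ _
      _ ≤ 2 * B := by linarith [hu c, hv c]
  have hp := cauchy3 (2 * B) w (u + v) huv
  have hq := cauchy3 B w v hv
  have hs : 0 ≤ dot3 w w := by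
    simp only [dot3, Fin.sum_univ_three]
    nlinarith [sq_nonneg (w 0), sq_nonneg (w 1), sq_nonneg (w 2)]
  have huu : 0 ≤ dot3 u u := by
    simp only [dot3, Fin.sum_univ_three]
    nlinarith [sq_nonneg (u 0), sq_nonneg (u 1), sq_nonneg (u 2)]
  set p := dot3 w (u + v) with hpdef
  set q := dot3 w v with hqdef
  set s := dot3 w w with hsdef
  have e1 : -(2 * p * q) ≤ p ^ 2 + q ^ 2 := by nlinarith [sq_nonneg (p + q)]
  have e2 : p ^ 2 + q ^ 2 ≤ 15 * B ^ 2 * s := by nlinarith [hp, hq]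
  have e3 : (0 : ℝ) ≤ lam * mu := mul_nonneg hlam hmu
  have e4 : lam * mu * (-(2 * p * q)) ≤ lam * mu * (15 * B ^ 2 * s) :=
    mul_le_mul_of_nonneg_left (e1.trans e2) e3
  have e5 : 0 ≤ 2 * lam * (1 + mu * dot3 u u) * s := by
    have : (0:ℝ) ≤ 1 + mu * dot3 u u := by nlinarith [mul_nonneg hmu huu]
    have := mul_nonneg (mul_nonneg (by linarith : (0:ℝ) ≤ 2 * lam) this) hs
    linarith
  nlinarith [e4, e5]

open MeasureTheory Set

theorem integral_div_zero {n : ℕ} (f : Fin (n+1) → (Fin (n+1) → ℝ) → ℝ)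
    (f' : Fin (n+1) → (Fin (n+1) → ℝ) → ((Fin (n+1) → ℝ) →L[ℝ] ℝ))
    (hd : ∀ i x, HasFDerivAt (f i) (f' i x) x)
    (hper : ∀ i (x : Fin (n+1) → ℝ) (k : Fin (n+1) → ℤ),
      f i (x + fun j => (k j : ℝ)) = f i x)
    (hi : IntegrableOn (fun x => ∑ i, f' i x (Pi.single i 1)) (Icc 0 1)) :
    ∫ x in Icc (0 : Fin (n+1) → ℝ) 1, ∑ i, f' i x (Pi.single i 1) = 0 := by
  have h01 : (0 : Fin (n+1) → ℝ) ≤ 1 := by intro j; norm_num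
  have Hc : ∀ i, ContinuousOn (f i) (Icc (0 : Fin (n+1) → ℝ) 1) := fun i =>
    (continuous_iff_continuousAt.2 fun x => (hd i x).differentiableAt.continuousAt).continuousOn
  have := MeasureTheory.integral_divergence_of_hasFDerivAt_off_countable'
    (0 : Fin (n+1) → ℝ) 1 h01 f f' ∅ countable_empty Hc
    (fun x _ i => hd i x) hi
  rw [this]
  refine Finset.sum_eq_zero fun i _ => ?_
  have key : ∀ x : Fin n → ℝ,
      f i (Fin.insertNth i ((1 : Fin (n+1) → ℝ) i) x)
        = f i (Fin.insertNth i ((0 : Fin (n+1) → ℝ) i) x) := by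
    intro x
    have : Fin.insertNth i ((1 : Fin (n+1) → ℝ) i) x
        = Fin.insertNth i ((0 : Fin (n+1) → ℝ) i) x
          + fun j => (((Pi.single i 1 : Fin (n+1) → ℤ)) j : ℝ) := by
      funext j
      rcases eq_or_ne j i with rfl | hj
      · simp
      · obtain ⟨l, rfl⟩ := Fin.exists_succAbove_eq hj
        simp [Pi.single_apply, Fin.succAbove_ne i l]
    rw [this, hper]
  simp only [key, sub_self]

open MeasureTheory Set

lemma gronwall_zero (E E' : ℝ → ℝ) (K T : ℝ) (hT : 0 < T)
    (hd : ∀ t ∈ Set.Icc 0 T, HasDerivAt E (E' t) t)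
    (hb : ∀ t ∈ Set.Icc 0 T, E' t ≤ K * E t)
    (h0 : E 0 = 0) (hnn : ∀ t ∈ Set.Icc 0 T, 0 ≤ E t) :
    ∀ t ∈ Set.Icc 0 T, E t = 0 := by
  set g := fun t => E t * Real.exp (-K * t) with hgdef
  have hg : ∀ t ∈ Set.Icc 0 T, HasDerivAt g ((E' t - K * E t) * Real.exp (-K * t)) t := by
    intro t ht
    have h2 : HasDerivAt (fun s => Real.exp (-K * s)) (Real.exp (-K * t) * (-K)) t := by
      simpa using (((hasDerivAt_id t).const_mul (-K)).exp)
    have h1 : HasDerivAt (fun y => E y * Real.exp (-K * y)) _ t := (hd t ht).mul h2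
    convert h1 using 1
    ring
  have hcont : ContinuousOn g (Set.Icc 0 T) := fun t ht =>
    ((hg t ht).continuousAt).continuousWithinAt
  have hanti : AntitoneOn g (Set.Icc 0 T) := by
    apply antitoneOn_of_deriv_nonpos (convex_Icc 0 T) hcont
    · intro t ht
      rw [interior_Icc] at ht
      exact ((hg t (Ioo_subset_Icc_self ht)).differentiableAt).differentiableWithinAt
    · intro t ht
      rw [interior_Icc] at ht
      rw [(hg t (Ioo_subset_Icc_self ht)).deriv]
      have h3 : E' t - K * E t ≤ 0 := sub_nonpos.2 (hb t (Ioo_subset_Icc_self ht))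
      exact mul_nonpos_of_nonpos_of_nonneg h3 (Real.exp_nonneg _)
  intro t ht
  have h4 : g t ≤ g 0 := hanti (left_mem_Icc.2 hT.le) ht ht.1
  have h5 : g 0 = 0 := by simp [hgdef, h0]
  have h6 : E t * Real.exp (-K * t) ≤ 0 := by rw [← h5]; exact h4
  have h7 := Real.exp_pos (-K * t)
  have h8 : E t ≤ 0 := by nlinarith
  exact le_antisymm h8 (hnn t ht)

open MeasureTheory Set

lemma fract_decomp {m : ℕ} (x : Fin m → ℝ) :
    ∃ (y : Fin m → ℝ) (k : Fin m → ℤ), y ∈ Set.Icc (0 : Fin m → ℝ) 1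
      ∧ x = y + fun i => (k i : ℝ) := by
  refine ⟨fun i => Int.fract (x i), fun i => ⌊x i⌋, ⟨fun i => Int.fract_nonneg _,
    fun i => (Int.fract_lt_one _).le⟩, ?_⟩
  funext i
  simp only [Pi.add_apply]
  rw [Int.fract]
  ring

lemma zero_of_integral_zero {m : ℕ} (f : (Fin m → ℝ) → ℝ) (hc : Continuous f)
    (hnn : ∀ x, 0 ≤ f x) (hper : ∀ (x : Fin m → ℝ) (k : Fin m → ℤ),
      f (x + fun i => (k i : ℝ)) = f x)
    (hint : ∫ x in Set.Icc (0 : Fin m → ℝ) 1, f x = 0) : ∀ x, f x = 0 := by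
  have hio : IntegrableOn f (Set.Icc (0 : Fin m → ℝ) 1) :=
    hc.continuousOn.integrableOn_compact isCompact_Icc
  have hae : f =ᵐ[volume.restrict (Set.Icc (0 : Fin m → ℝ) 1)] 0 :=
    (setIntegral_eq_zero_iff_of_nonneg_ae (Filter.Eventually.of_forall hnn) hio).1 hint
  set N : Set (Fin m → ℝ) := {x | f x ≠ 0} with hN
  have hNopen : IsOpen N := isOpen_ne.preimage hc
  have hN0 : volume (N ∩ Set.Icc (0 : Fin m → ℝ) 1) = 0 := by
    have h1 : volume.restrict (Set.Icc (0 : Fin m → ℝ) 1) N = 0 := by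
      have := hae
      rw [Filter.EventuallyEq, ae_iff] at this
      simpa [N] using this
    rwa [Measure.restrict_apply hNopen.measurableSet] at h1
  have hNnull : volume N = 0 := by
    have hsub : N ⊆ ⋃ k : Fin m → ℤ,
        (fun y => y + fun i => ((k i : ℝ))) '' (N ∩ Set.Icc (0 : Fin m → ℝ) 1) := by
      intro x hx
      obtain ⟨y, k, hy, hxy⟩ := fract_decomp x
      have hx' : f x ≠ 0 := hx
      have hfy : f y ≠ 0 := by
        have heq : f x = f y := by rw [hxy, hper]
        rw [heq] at hx'; exact hx'
      exact Set.mem_iUnion.2 ⟨k, ⟨y, ⟨hfy, hy⟩, hxy.symm⟩⟩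
    refine measure_mono_null hsub (measure_iUnion_null fun k => ?_)
    have himg : (fun y => y + fun i => ((k i : ℝ))) '' (N ∩ Set.Icc (0 : Fin m → ℝ) 1)
        = (fun y => y + fun i => (-(k i : ℝ))) ⁻¹' (N ∩ Set.Icc (0 : Fin m → ℝ) 1) := by
      ext z
      constructor
      · rintro ⟨y, hy, rfl⟩
        have heq : (y + fun i => ((k i : ℝ))) + (fun i => (-(k i : ℝ))) = y := by
          funext i; simp
        simp only [Set.mem_preimage]
        rw [heq]; exact hy
      · intro hz
        refine ⟨z + fun i => (-(k i : ℝ)), hz, ?_⟩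
        funext i; simp
    rw [himg]
    have hcomm : (fun y : Fin m → ℝ => y + fun i => (-(k i : ℝ)))
        = (fun y : Fin m → ℝ => (fun i => (-(k i : ℝ))) + y) := by
      funext y; exact add_comm _ _
    rw [hcomm, measure_preimage_add]
    exact hN0
  have : N = ∅ := hNopen.eq_empty_of_measure_zero hNnull
  intro x
  by_contra hx
  have : x ∈ N := hx
  rw [‹N = ∅›] at this
  exact this

lemma exists_bound {m : ℕ} (φ : ℝ × (Fin m → ℝ) → ℝ) (hc : Continuous φ)
    (hper : ∀ (t : ℝ) (x : Fin m → ℝ) (k : Fin m → ℤ),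
      φ (t, x + fun i => (k i : ℝ)) = φ (t, x)) (T : ℝ) :
    ∃ B : ℝ, 0 ≤ B ∧ ∀ t ∈ Set.Icc (0 : ℝ) T, ∀ x, |φ (t, x)| ≤ B := by
  obtain ⟨C, hC⟩ := (isCompact_Icc.prod (isCompact_Icc (a := (0 : Fin m → ℝ)) (b := 1))
    : IsCompact (Set.Icc (0:ℝ) T ×ˢ Set.Icc (0 : Fin m → ℝ) 1)).exists_bound_of_continuousOn
    hc.continuousOn
  refine ⟨max C 0, le_max_right _ _, fun t ht x => ?_⟩
  obtain ⟨y, k, hy, rfl⟩ := fract_decomp x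
  rw [hper]
  exact le_trans (hC (t, y) (Set.mk_mem_prod ht hy)) (le_max_left _ _)

-- extra prelude lemmas
section extra
variable {m : ℕ} {Y : Type*} [NormedAddCommGroup Y] [NormedSpace ℝ Y]

lemma dot3_add_right (a b c : Fin 3 → ℝ) : dot3 a (b + c) = dot3 a b + dot3 a c := by
  simp [dot3, Pi.add_apply, mul_add, Finset.sum_add_distrib]

theorem fderiv_periodic {F : ℝ × (Fin m → ℝ) → Y} (hF : ContDiff ℝ (⊤ : ℕ∞) F)
    (hper : ∀ (t : ℝ) (x : Fin m → ℝ) (k : Fin m → ℤ),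
      F (t, x + fun i => (k i : ℝ)) = F (t, x)) :
    ∀ (t : ℝ) (x : Fin m → ℝ) (k : Fin m → ℤ),
      fderiv ℝ F (t, x + fun i => (k i : ℝ)) = fderiv ℝ F (t, x) := by
  intro t x k
  set c : ℝ × (Fin m → ℝ) := (0, fun i => (k i : ℝ)) with hc
  have hFc : (fun q => F (q + c)) = F := by
    funext q
    have : q + c = (q.1, q.2 + fun i => (k i : ℝ)) := by ext <;> simp [hc]
    rw [this, hper]
  have key := fderiv_shift_eq hF hFc (t, x)
  have hpt : (t, x) + c = (t, x + fun i => (k i : ℝ)) := by ext <;> simp [hc]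
  rw [← hpt, key]

end extra

open MeasureTheory Set

theorem main_aux (n : ℕ) (lam mu T : ℝ) (hlam : 0 < lam) (hmu : 0 < mu) (hT : 0 < T)
    (F₁ F₂ : ℝ × (Fin (n+1) → ℝ) → Fin 3 → ℝ)
    (hs₁ : ContDiff ℝ (⊤ : ℕ∞) F₁) (hs₂ : ContDiff ℝ (⊤ : ℕ∞) F₂)
    (hp₁ : ∀ (t : ℝ) (x : Fin (n+1) → ℝ) (k : Fin (n+1) → ℤ),
      F₁ (t, x + fun i => (k i : ℝ)) = F₁ (t, x))
    (hp₂ : ∀ (t : ℝ) (x : Fin (n+1) → ℝ) (k : Fin (n+1) → ℤ),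
      F₂ (t, x + fun i => (k i : ℝ)) = F₂ (t, x))
    (he₁ : ∀ t ∈ Set.Icc (0:ℝ) T, ∀ x, pd (1, 0) F₁ (t, x) =
      (∑ i, pd (0, Pi.single i 1) (pd (0, Pi.single i 1) F₁) (t, x))
      + crossProduct (F₁ (t, x)) (∑ i, pd (0, Pi.single i 1) (pd (0, Pi.single i 1) F₁) (t, x))
      - (lam * (1 + mu * dot3 (F₁ (t, x)) (F₁ (t, x)))) • F₁ (t, x))
    (he₂ : ∀ t ∈ Set.Icc (0:ℝ) T, ∀ x, pd (1, 0) F₂ (t, x) =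
      (∑ i, pd (0, Pi.single i 1) (pd (0, Pi.single i 1) F₂) (t, x))
      + crossProduct (F₂ (t, x)) (∑ i, pd (0, Pi.single i 1) (pd (0, Pi.single i 1) F₂) (t, x))
      - (lam * (1 + mu * dot3 (F₂ (t, x)) (F₂ (t, x)))) • F₂ (t, x))
    (h0 : ∀ x, F₁ ((0:ℝ), x) = F₂ ((0:ℝ), x)) :
    ∀ t ∈ Set.Icc (0:ℝ) T, ∀ x, F₁ (t, x) = F₂ (t, x) := by
  classical
  set Fw : ℝ × (Fin (n+1) → ℝ) → Fin 3 → ℝ := fun p => F₁ p - F₂ p with hFw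
  have hsw : ContDiff ℝ (⊤ : ℕ∞) Fw := hs₁.sub hs₂
  have hpw : ∀ (t : ℝ) (x : Fin (n+1) → ℝ) (k : Fin (n+1) → ℤ),
      Fw (t, x + fun i => (k i : ℝ)) = Fw (t, x) := by
    intro t x k
    rw [hFw]
    simp only
    rw [hp₁, hp₂]
  have hsw1 : ∀ i : Fin (n+1), ContDiff ℝ (⊤ : ℕ∞) (pd (0, Pi.single i 1) Fw) :=
    fun i => contDiff_pd _ hsw
  set Ψ : Fin (n+1) → ℝ × (Fin (n+1) → ℝ) → Fin 3 → ℝ :=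
    fun i => fun p => pd (0, Pi.single i 1) Fw p
      + crossProduct (F₂ p) (pd (0, Pi.single i 1) Fw p) with hΨ
  have hsΨ : ∀ i, ContDiff ℝ (⊤ : ℕ∞) (Ψ i) :=
    fun i => (hsw1 i).add (contDiff_cross hs₂ (hsw1 i))
  set Φ : Fin (n+1) → ℝ × (Fin (n+1) → ℝ) → ℝ :=
    fun i => fun p => 2 * dot3 (Fw p) (Ψ i p) with hΦ
  have hsΦ : ∀ i, ContDiff ℝ (⊤ : ℕ∞) (Φ i) :=
    fun i => contDiff_const.mul (contDiff_dot3 hsw (hsΨ i))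
  set G : ℝ × (Fin (n+1) → ℝ) → ℝ := fun p => dot3 (Fw p) (Fw p) with hG
  have hsG : ContDiff ℝ (⊤ : ℕ∞) G := contDiff_dot3 hsw hsw
  set E : ℝ → ℝ := fun t => ∫ x in Set.Icc (0 : Fin (n+1) → ℝ) 1, G (t, x) with hE
  set E' : ℝ → ℝ :=
    fun t => ∫ x in Set.Icc (0 : Fin (n+1) → ℝ) 1, pd (1, 0) G (t, x) with hE'
  have hEd : ∀ t, HasDerivAt E (E' t) t := fun t => hasDerivAt_energy G hsG t
  -- bounds
  obtain ⟨B₁, hB₁0, hB₁⟩ := exists_bound (fun p => ‖F₁ p‖) hs₁.continuous.norm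
    (fun t x k => by rw [hp₁]) T
  obtain ⟨B₂, hB₂0, hB₂⟩ := exists_bound (fun p => ‖F₂ p‖) hs₂.continuous.norm
    (fun t x k => by rw [hp₂]) T
  obtain ⟨B₃, hB₃0, hB₃⟩ := exists_bound (fun p => ‖fderiv ℝ F₂ p‖)
    ((hs₂.fderiv_right (m := (⊤ : ℕ∞)) (by simp)).continuous.norm)
    (fun t x k => by rw [fderiv_periodic hs₂ hp₂]) T
  set B := max B₁ (max B₂ B₃) with hB
  have hB0 : 0 ≤ B := le_trans hB₁0 (le_max_left _ _)
  have hu : ∀ t ∈ Set.Icc (0:ℝ) T, ∀ x c, |F₁ (t, x) c| ≤ B := by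
    intro t ht x c
    have h1 : |F₁ (t, x) c| ≤ ‖F₁ (t, x)‖ := by
      have := norm_le_pi_norm (F₁ (t, x)) c
      rwa [Real.norm_eq_abs] at this
    have h2 := hB₁ t ht x
    rw [abs_norm] at h2
    exact h1.trans (h2.trans (le_max_left _ _))
  have hv : ∀ t ∈ Set.Icc (0:ℝ) T, ∀ x c, |F₂ (t, x) c| ≤ B := by
    intro t ht x c
    have h1 : |F₂ (t, x) c| ≤ ‖F₂ (t, x)‖ := by
      have := norm_le_pi_norm (F₂ (t, x)) c
      rwa [Real.norm_eq_abs] at this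
    have h2 := hB₂ t ht x
    rw [abs_norm] at h2
    exact h1.trans (h2.trans ((le_max_left _ _).trans (le_max_right _ _)))
  have hvd : ∀ t ∈ Set.Icc (0:ℝ) T, ∀ x (i : Fin (n+1)) c,
      |pd (0, Pi.single i 1) F₂ (t, x) c| ≤ B := by
    intro t ht x i c
    have h1 : |pd (0, Pi.single i 1) F₂ (t, x) c| ≤ ‖pd (0, Pi.single i 1) F₂ (t, x)‖ := by
      have := norm_le_pi_norm (pd (0, Pi.single i 1) F₂ (t, x)) c
      rwa [Real.norm_eq_abs] at this
    have h2 : ‖pd (0, Pi.single i 1) F₂ (t, x)‖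
        ≤ ‖fderiv ℝ F₂ (t, x)‖ * ‖(((0:ℝ), Pi.single i (1:ℝ)) : ℝ × (Fin (n+1) → ℝ))‖ :=
      ContinuousLinearMap.le_opNorm _ _
    have h3 : ‖(((0:ℝ), Pi.single i (1:ℝ)) : ℝ × (Fin (n+1) → ℝ))‖ ≤ 1 := by
      rw [Prod.norm_def]
      simp only [norm_zero]
      apply max_le (by norm_num)
      apply (pi_norm_le_iff_of_nonneg zero_le_one).2
      intro j
      rcases eq_or_ne j i with rfl | hj
      · simp
      · rw [Pi.single_eq_of_ne hj]
        simp
    have h4 := hB₃ t ht x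
    rw [abs_norm] at h4
    have h5 : ‖fderiv ℝ F₂ (t, x)‖ * ‖(((0:ℝ), Pi.single i (1:ℝ)) : ℝ × (Fin (n+1) → ℝ))‖
        ≤ B₃ * 1 :=
      mul_le_mul h4 h3 (norm_nonneg _) hB₃0
    have h6 : B₃ ≤ B := (le_max_right _ _).trans (le_max_right _ _)
    calc |pd (0, Pi.single i 1) F₂ (t, x) c| ≤ _ := h1.trans h2
      _ ≤ B₃ * 1 := h5
      _ ≤ B := by rw [mul_one]; exact h6
  set C1 : ℝ := 9 * B ^ 2 * ((n : ℝ) + 1) with hC1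
  set C2 : ℝ := 15 * lam * mu * B ^ 2 with hC2
  set K : ℝ := C1 + C2 with hK
  -- divergence
  set D : ℝ → (Fin (n+1) → ℝ) → ℝ :=
    fun t x => ∑ i, pd (0, Pi.single i 1) (Φ i) (t, x) with hD
  have hDcont : ∀ t, Continuous (fun x => D t x) := by
    intro t
    rw [hD]
    exact continuous_finset_sum _ fun i _ =>
      (contDiff_pd _ (hsΦ i)).continuous.comp (Continuous.prodMk_right t)
  have hdiv : ∀ t : ℝ, (∫ x in Set.Icc (0 : Fin (n+1) → ℝ) 1, D t x) = 0 := by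
    intro t
    have hslice : ∀ i, ContDiff ℝ (⊤ : ℕ∞) (fun y => Φ i (t, y)) :=
      fun i => (hsΦ i).comp (contDiff_const.prodMk contDiff_id)
    have hfun : ∀ x, (∑ i, fderiv ℝ (fun y => Φ i (t, y)) x (Pi.single i 1)) = D t x := by
      intro x
      rw [hD]
      exact Finset.sum_congr rfl fun i _ => fderiv_slice (hsΦ i) t x _
    have h := integral_div_zero (fun i y => Φ i (t, y))
      (fun i y => fderiv ℝ (fun y' => Φ i (t, y')) y)
      (fun i x => ((hslice i).differentiable (by simp) x).hasFDerivAt)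
      (fun i y k => by
        have hΨper : Ψ i (t, y + fun j => (k j : ℝ)) = Ψ i (t, y) := by
          rw [hΨ]
          simp only
          rw [pd_periodic hsw hpw _ t y k, hp₂]
        rw [hΦ]
        simp only
        rw [hpw, hΨper])
      (by
        have heq2 : (fun x : Fin (n+1) → ℝ =>
            ∑ i, fderiv ℝ (fun y => Φ i (t, y)) x (Pi.single i 1)) = fun x => D t x :=
          funext hfun
        rw [heq2]
        exact (hDcont t).continuousOn.integrableOn_compact isCompact_Icc)
    calc (∫ x in Set.Icc (0 : Fin (n+1) → ℝ) 1, D t x)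
        = ∫ x in Set.Icc (0 : Fin (n+1) → ℝ) 1,
            ∑ i, fderiv ℝ (fun y => Φ i (t, y)) x (Pi.single i 1) :=
          setIntegral_congr_fun measurableSet_Icc (fun x _ => (hfun x).symm)
      _ = 0 := h
  -- E at 0, nonneg
  have hGnn : ∀ t x, 0 ≤ G (t, x) := by
    intro t x
    rw [hG]
    exact dot3_self_nonneg _
  have hEnn : ∀ t, 0 ≤ E t := by
    intro t
    rw [hE]
    exact setIntegral_nonneg measurableSet_Icc fun x _ => hGnn t x
  have hE0 : E 0 = 0 := by
    rw [hE]
    simp only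
    have hz : ∀ x : Fin (n+1) → ℝ, G ((0:ℝ), x) = 0 := by
      intro x
      rw [hG]
      simp only
      have : Fw ((0:ℝ), x) = 0 := by
        rw [hFw]
        simp only
        rw [h0 x, sub_self]
      rw [this]
      simp [dot3]
    rw [setIntegral_congr_fun measurableSet_Icc (fun x _ => hz x)]
    simp
  -- pointwise inequality
  have hineq : ∀ t ∈ Set.Icc (0:ℝ) T, ∀ x, pd (1, 0) G (t, x) ≤ D t x + K * G (t, x) := by
    intro t ht x
    set w : Fin 3 → ℝ := Fw (t, x) with hwdef
    set u : Fin 3 → ℝ := F₁ (t, x) with hudef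
    set vv : Fin 3 → ℝ := F₂ (t, x) with hvvdef
    have hw_uv : w = u - vv := by rw [hwdef, hFw]
    set bb : Fin (n+1) → Fin 3 → ℝ :=
      fun i => pd (0, Pi.single i 1) Fw (t, x) with hbb
    set BB : Fin (n+1) → Fin 3 → ℝ :=
      fun i => pd (0, Pi.single i 1) (pd (0, Pi.single i 1) Fw) (t, x) with hBB
    set vd : Fin (n+1) → Fin 3 → ℝ :=
      fun i => pd (0, Pi.single i 1) F₂ (t, x) with hvdd
    set d1 : Fin 3 → ℝ :=
      ∑ i, pd (0, Pi.single i 1) (pd (0, Pi.single i 1) F₁) (t, x) with hd1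
    set d2 : Fin 3 → ℝ :=
      ∑ i, pd (0, Pi.single i 1) (pd (0, Pi.single i 1) F₂) (t, x) with hd2
    -- linearity facts
    have hBBsub : ∀ i, BB i = pd (0, Pi.single i 1) (pd (0, Pi.single i 1) F₁) (t, x)
        - pd (0, Pi.single i 1) (pd (0, Pi.single i 1) F₂) (t, x) := by
      intro i
      have hfun : pd (0, Pi.single i 1) Fw
          = fun p => pd (0, Pi.single i 1) F₁ p - pd (0, Pi.single i 1) F₂ p := by
        funext q
        rw [hFw]
        exact pd_sub _ _ hs₁ hs₂
      rw [hBB]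
      simp only
      rw [hfun, pd_sub _ _ (contDiff_pd _ hs₁) (contDiff_pd _ hs₂)]
    have hDelta : (∑ i, BB i) = d1 - d2 := by
      rw [hd1, hd2, ← Finset.sum_sub_distrib]
      exact Finset.sum_congr rfl fun i _ => hBBsub i
    have hwt : pd (1, 0) Fw (t, x) = pd (1, 0) F₁ (t, x) - pd (1, 0) F₂ (t, x) := by
      rw [hFw]
      exact pd_sub _ _ hs₁ hs₂
    rw [he₁ t ht x, he₂ t ht x] at hwt
    -- pd of G
    have hpdG : pd (1, 0) G (t, x)
        = dot3 (pd (1, 0) Fw (t, x)) w + dot3 w (pd (1, 0) Fw (t, x)) := by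
      rw [hG]
      exact pd_dot3 _ _ hsw hsw
    -- golden identity
    have hgolden : dot3 (pd (1, 0) Fw (t, x)) w + dot3 w (pd (1, 0) Fw (t, x))
        = 2 * dot3 w (d1 - d2) + 2 * dot3 w (crossProduct vv (d1 - d2))
          + (-(2 * lam * dot3 w ((1 + mu * dot3 u u) • u - (1 + mu * dot3 vv vv) • vv))) := by
      rw [hwt, hw_uv]
      simp only [dot3, crossP_apply, Fin.sum_univ_three, Pi.sub_apply, Pi.add_apply,
        Pi.smul_apply, smul_eq_mul, Matrix.cons_val_zero, Matrix.cons_val_one,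
        Matrix.head_cons, Matrix.cons_val_two, Matrix.tail_cons]
      ring
    -- divergence computation
    have hDval : D t x = ∑ i, (2 * (dot3 (bb i) (Ψ i (t, x))
        + dot3 w (BB i + (crossProduct (vd i) (bb i) + crossProduct vv (BB i))))) := by
      rw [hD]
      refine Finset.sum_congr rfl fun i _ => ?_
      have hstep1 : pd (0, Pi.single i 1) (Φ i) (t, x)
          = 2 * pd (0, Pi.single i 1) (fun p => dot3 (Fw p) (Ψ i p)) (t, x) := by
        rw [hΦ]
        exact pd_const_mul _ _ (contDiff_dot3 hsw (hsΨ i)) 2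
      have hstep2 : pd (0, Pi.single i 1) (fun p => dot3 (Fw p) (Ψ i p)) (t, x)
          = dot3 (bb i) (Ψ i (t, x)) + dot3 w (pd (0, Pi.single i 1) (Ψ i) (t, x)) :=
        pd_dot3 _ _ hsw (hsΨ i)
      have hstep3 : pd (0, Pi.single i 1) (Ψ i) (t, x)
          = BB i + (crossProduct (vd i) (bb i) + crossProduct vv (BB i)) := by
        rw [hΨ]
        simp only
        rw [pd_add _ _ (hsw1 i) (contDiff_cross hs₂ (hsw1 i)),
          pd_cross _ _ hs₂ (hsw1 i)]
      rw [hstep1, hstep2, hstep3]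
    have hΨval : ∀ i, Ψ i (t, x) = bb i + crossProduct vv (bb i) := by
      intro i
      rw [hΨ]
    have hDval2 : D t x = (∑ i, 2 * dot3 (bb i) (bb i))
        + ((∑ i, 2 * dot3 w (crossProduct (vd i) (bb i)))
          + (2 * dot3 w (d1 - d2) + 2 * dot3 w (crossProduct vv (d1 - d2)))) := by
      rw [hDval]
      have hper_i : ∀ i, 2 * (dot3 (bb i) (Ψ i (t, x))
          + dot3 w (BB i + (crossProduct (vd i) (bb i) + crossProduct vv (BB i))))
          = 2 * dot3 (bb i) (bb i) + (2 * dot3 w (crossProduct (vd i) (bb i))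
            + (2 * dot3 w (BB i) + 2 * dot3 w (crossProduct vv (BB i)))) := by
        intro i
        rw [hΨval i, dot3_add_right, dot3_cross_self, dot3_add_right, dot3_add_right]
        ring
      rw [Finset.sum_congr rfl fun i _ => hper_i i]
      rw [Finset.sum_add_distrib, Finset.sum_add_distrib, Finset.sum_add_distrib]
      have hc1 : (∑ i, 2 * dot3 w (BB i)) = 2 * dot3 w (d1 - d2) := by
        rw [← Finset.mul_sum, ← dot3_sum_right, hDelta]
      have hc2 : (∑ i, 2 * dot3 w (crossProduct vv (BB i)))
          = 2 * dot3 w (crossProduct vv (d1 - d2)) := by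
        rw [← Finset.mul_sum, ← dot3_sum_right, ← map_sum (crossProduct vv) BB Finset.univ,
          hDelta]
      rw [hc1, hc2]
    -- per-i estimates
    have hpt1 : ∀ i, -(2 * dot3 (bb i) (bb i))
        - 2 * dot3 w (crossProduct (vd i) (bb i)) ≤ 9 * B ^ 2 * dot3 w w :=
      fun i => ptwise1 B w (bb i) (vd i) (fun c => hvd t ht x i c)
    have hsum1 : (∑ i, (-(2 * dot3 (bb i) (bb i))
        - 2 * dot3 w (crossProduct (vd i) (bb i)))) ≤ C1 * dot3 w w := by
      calc (∑ i, (-(2 * dot3 (bb i) (bb i)) - 2 * dot3 w (crossProduct (vd i) (bb i))))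
          ≤ ∑ _i : Fin (n+1), 9 * B ^ 2 * dot3 w w :=
            Finset.sum_le_sum fun i _ => hpt1 i
        _ = C1 * dot3 w w := by
            rw [Finset.sum_const, Finset.card_univ, Fintype.card_fin, nsmul_eq_mul, hC1]
            push_cast
            ring
    have hsum1' : -(∑ i, 2 * dot3 (bb i) (bb i))
        - (∑ i, 2 * dot3 w (crossProduct (vd i) (bb i))) ≤ C1 * dot3 w w := by
      rw [← Finset.sum_neg_distrib, ← Finset.sum_sub_distrib] at *
      exact hsum1
    have hpt2 : -(2 * lam * dot3 (u - vv) ((1 + mu * dot3 u u) • u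
        - (1 + mu * dot3 vv vv) • vv)) ≤ 15 * lam * mu * B ^ 2 * dot3 (u - vv) (u - vv) :=
      ptwise2 lam mu B hlam.le hmu.le u vv (fun c => hu t ht x c) (fun c => hv t ht x c)
    rw [← hw_uv] at hpt2
    have hpt2' : -(2 * lam * dot3 w ((1 + mu * dot3 u u) • u
        - (1 + mu * dot3 vv vv) • vv)) ≤ C2 * dot3 w w := by
      rw [hC2]
      exact hpt2
    have hGval : G (t, x) = dot3 w w := by rw [hG]
    have hKval : K * G (t, x) = C1 * dot3 w w + C2 * dot3 w w := by
      rw [hGval, hK]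
      ring
    rw [hpdG, hgolden, hDval2, hKval]
    linarith [hsum1', hpt2']
  -- E' ≤ K E on [0, T]
  have hEb : ∀ t ∈ Set.Icc (0:ℝ) T, E' t ≤ K * E t := by
    intro t ht
    have hpdGc : Continuous (fun x : Fin (n+1) → ℝ => pd (1, 0) G (t, x)) :=
      (contDiff_pd _ hsG).continuous.comp (Continuous.prodMk_right t)
    have hGc : Continuous (fun x : Fin (n+1) → ℝ => G (t, x)) :=
      hsG.continuous.comp (Continuous.prodMk_right t)
    have hint1 : IntegrableOn (fun x : Fin (n+1) → ℝ => pd (1, 0) G (t, x))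
        (Set.Icc 0 1) :=
      hpdGc.continuousOn.integrableOn_compact isCompact_Icc
    have hintD : IntegrableOn (fun x => D t x) (Set.Icc (0 : Fin (n+1) → ℝ) 1) :=
      (hDcont t).continuousOn.integrableOn_compact isCompact_Icc
    have hintG : IntegrableOn (fun x : Fin (n+1) → ℝ => K * G (t, x))
        (Set.Icc 0 1) :=
      (continuous_const.mul hGc).continuousOn.integrableOn_compact isCompact_Icc
    have hint2 : IntegrableOn (fun x : Fin (n+1) → ℝ => D t x + K * G (t, x))
        (Set.Icc 0 1) := hintD.add hintG
    rw [hE', hE]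
    simp only
    calc (∫ x in Set.Icc (0 : Fin (n+1) → ℝ) 1, pd (1, 0) G (t, x))
        ≤ ∫ x in Set.Icc (0 : Fin (n+1) → ℝ) 1, (D t x + K * G (t, x)) :=
          setIntegral_mono_on hint1 hint2 measurableSet_Icc fun x _ => hineq t ht x
      _ = (∫ x in Set.Icc (0 : Fin (n+1) → ℝ) 1, D t x)
          + ∫ x in Set.Icc (0 : Fin (n+1) → ℝ) 1, K * G (t, x) :=
          integral_add hintD hintG
      _ = K * ∫ x in Set.Icc (0 : Fin (n+1) → ℝ) 1, G (t, x) := by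
          rw [hdiv t, zero_add, integral_const_mul]
  -- Gronwall
  have hEzero : ∀ t ∈ Set.Icc (0:ℝ) T, E t = 0 :=
    gronwall_zero E E' K T hT (fun t _ => hEd t) hEb hE0 (fun t _ => hEnn t)
  -- conclusion
  intro t ht x
  have hz : ∀ y : Fin (n+1) → ℝ, G (t, y) = 0 := by
    apply zero_of_integral_zero (fun y => G (t, y))
      (hsG.continuous.comp (Continuous.prodMk_right t)) (fun y => hGnn t y)
      (fun y k => by rw [hG]; simp only; rw [hpw])
    have := hEzero t ht
    rw [hE] at this
    exact this
  have h1 : dot3 (Fw (t, x)) (Fw (t, x)) = 0 := by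
    have := hz x
    rwa [hG] at this
  have h2 : ∀ c, Fw (t, x) c * Fw (t, x) c = 0 := by
    intro c
    have hnn : ∀ c' ∈ (Finset.univ : Finset (Fin 3)), 0 ≤ Fw (t, x) c' * Fw (t, x) c' :=
      fun c' _ => mul_self_nonneg _
    exact (Finset.sum_eq_zero_iff_of_nonneg hnn).1 h1 c (Finset.mem_univ c)
  have h3 : Fw (t, x) = 0 := funext fun c => mul_self_eq_zero.1 (h2 c)
  rw [hFw] at h3
  exact sub_eq_zero.1 h3

/-- Uniqueness of smooth periodic solutions of the LLB equation: two smooth periodic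
solutions on `[0,T]` over `ℝ^m` with the same initial datum coincide on `[0,T] × ℝ^m`. -/
theorem llb_uniqueness (m : ℕ) (hm : 1 ≤ m) (lam mu T : ℝ)
    (hlam : 0 < lam) (hmu : 0 < mu) (hT : 0 < T)
    (V₁ V₂ : ℝ → (Fin m → ℝ) → (Fin 3 → ℝ))
    (hV₁ : IsLLB m lam mu T V₁) (hV₂ : IsLLB m lam mu T V₂)
    (h0 : ∀ x : Fin m → ℝ, V₁ 0 x = V₂ 0 x) :
    ∀ t ∈ Set.Icc (0 : ℝ) T, ∀ x : Fin m → ℝ, V₁ t x = V₂ t x := by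
  obtain ⟨n, rfl⟩ : ∃ n, m = n + 1 := ⟨m - 1, (Nat.succ_pred_eq_of_pos hm).symm⟩
  obtain ⟨hs₁, hp₁, he₁⟩ := hV₁
  obtain ⟨hs₂, hp₂, he₂⟩ := hV₂
  have key := main_aux n lam mu T hlam hmu hT
    (fun p => V₁ p.1 p.2) (fun p => V₂ p.1 p.2) hs₁ hs₂
    (fun t x k => hp₁ t x k) (fun t x k => hp₂ t x k)
    (by
      intro t ht x
      have hlap : lap (n+1) (V₁ t) x = ∑ i, pd (0, Pi.single i 1)
          (pd (0, Pi.single i 1) (fun p : ℝ × (Fin (n+1) → ℝ) => V₁ p.1 p.2)) (t, x) :=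
        lap_slice_eq hs₁ t x
      have hderiv : deriv (fun s => V₁ s x) t
          = pd (1, 0) (fun p : ℝ × (Fin (n+1) → ℝ) => V₁ p.1 p.2) (t, x) :=
        (hasDerivAt_slice hs₁ t x).deriv
      have heq := he₁ t ht x
      rw [hderiv, hlap] at heq
      have hsq : (∑ c, V₁ t x c ^ 2) = dot3 (V₁ t x) (V₁ t x) := by
        simp [dot3, pow_two]
      rw [hsq] at heq
      exact heq)
    (by
      intro t ht x
      have hlap : lap (n+1) (V₂ t) x = ∑ i, pd (0, Pi.single i 1)
          (pd (0, Pi.single i 1) (fun p : ℝ × (Fin (n+1) → ℝ) => V₂ p.1 p.2)) (t, x) :=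
        lap_slice_eq hs₂ t x
      have hderiv : deriv (fun s => V₂ s x) t
          = pd (1, 0) (fun p : ℝ × (Fin (n+1) → ℝ) => V₂ p.1 p.2) (t, x) :=
        (hasDerivAt_slice hs₂ t x).deriv
      have heq := he₂ t ht x
      rw [hderiv, hlap] at heq
      have hsq : (∑ c, V₂ t x c ^ 2) = dot3 (V₂ t x) (V₂ t x) := by
        simp [dot3, pow_two]
      rw [hsq] at heq
      exact heq)
    (fun x => h0 x)
  exact fun t ht x => key t ht x
end
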